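/- arXiv:1502.00235 — 7 statements merged into one kernel-verified Lean document; each statement's English description precedes it below -/
import Mathlib

section
/- Let n ≥ 1 and 0 ≤ k ≤ n. Every k × n Latin rectangle can be completed to a Latin square of order n; that is, for every k × n Latin rectangle R there exists at least one Latin square of order n whose first k rows agree with R. -/
/-- A Latin square of order `n`: an `n × n` matrix (entries indexed by `Fin n`,
values in `Fin n`, representing `{1,…,n}`) in which every row and every column
is a permutation of the symbol set. -/
def IsLatinSquare (n : ℕ) (M : Fin n → Fin n → Fin n) : Prop :=
  (∀ i, Function.Bijective (M i)) ∧ (∀ j, Function.Bijective fun i => M i j)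

/-- A `k × n` Latin rectangle: every row is a permutation of the `n` symbols,
and the entries within each column are pairwise distinct. -/
def IsLatinRectangle (k n : ℕ) (R : Fin k → Fin n → Fin n) : Prop :=
  (∀ i, Function.Bijective (R i)) ∧ (∀ j, Function.Injective fun i => R i j)

open Finset

/-- Using Hall's marriage theorem, a Latin rectangle with `k < n` rows admits
a new row avoiding all existing column entries. -/
lemma exists_new_row (n k : ℕ) (hkn : k < n) (R : Fin k → Fin n → Fin n)
    (hR : IsLatinRectangle k n R) :
    ∃ σ : Fin n → Fin n, Function.Injective σ ∧ ∀ (j : Fin n) (i : Fin k), R i j ≠ σ j := by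
  classical
  -- available symbols for column j
  set t : Fin n → Finset (Fin n) := fun j => (univ.image (fun i => R i j))ᶜ with ht
  have hcard : ∀ j, (t j).card = n - k := by
    intro j
    have himg : (univ.image (fun i => R i j)).card = k := by
      rw [Finset.card_image_of_injective _ (hR.2 j), Finset.card_univ, Fintype.card_fin]
    rw [ht]
    simp [Finset.card_compl, himg]
  -- each symbol is available in exactly n - k columns
  have hsym : ∀ s : Fin n, (univ.filter fun j => s ∈ t j).card = n - k := by
    intro s
    set g : Fin k → Fin n := fun i => (Equiv.ofBijective (R i) (hR.1 i)).symm s with hg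
    have hgR : ∀ i, R i (g i) = s := fun i =>
      (Equiv.ofBijective (R i) (hR.1 i)).apply_symm_apply s
    have hginj : Function.Injective g := by
      intro i₁ i₂ h
      apply hR.2 (g i₁)
      show R i₁ (g i₁) = R i₂ (g i₁)
      rw [hgR i₁, h, hgR i₂]
    have hfe : (univ.filter fun j => s ∈ t j) = (univ.image g)ᶜ := by
      ext j
      simp only [Finset.mem_filter, Finset.mem_univ, true_and, Finset.mem_compl,
        Finset.mem_image, ht, not_exists]
      constructor
      · rintro hj i rfl
        exact hj i (hgR i)
      · intro hj i hij
        refine hj i ?_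
        apply (Equiv.ofBijective (R i) (hR.1 i)).injective
        show R i (g i) = R i j
        rw [hgR i, hij]
    rw [hfe, Finset.card_compl, Finset.card_image_of_injective _ hginj]
    simp
  -- Hall's condition
  have hall : ∀ S : Finset (Fin n), S.card ≤ (S.biUnion t).card := by
    intro S
    set U := S.biUnion t with hU
    have htU : ∀ j ∈ S, t j ⊆ U := fun j hj => Finset.subset_biUnion_of_mem t hj
    have key : S.card * (n - k) ≤ U.card * (n - k) := by
      calc S.card * (n - k) = ∑ j ∈ S, (t j).card := by
            rw [Finset.sum_congr rfl (fun j _ => hcard j)]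
            simp [Finset.sum_const, Nat.mul_comm]
        _ = ∑ j ∈ S, ∑ s ∈ U, (if s ∈ t j then 1 else 0) := by
            apply Finset.sum_congr rfl
            intro j hj
            rw [← Finset.card_filter]
            congr 1
            rw [Finset.filter_mem_eq_inter, Finset.inter_eq_right.mpr (htU j hj)]
        _ = ∑ s ∈ U, ∑ j ∈ S, (if s ∈ t j then 1 else 0) := Finset.sum_comm
        _ ≤ ∑ s ∈ U, (n - k) := by
            apply Finset.sum_le_sum
            intro s _
            rw [← Finset.card_filter]
            calc (S.filter fun j => s ∈ t j).card
                ≤ (univ.filter fun j => s ∈ t j).card :=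
                  Finset.card_le_card (Finset.filter_subset_filter _ (Finset.subset_univ S))
              _ = n - k := hsym s
        _ = U.card * (n - k) := by simp [Finset.sum_const, Nat.mul_comm]
    exact Nat.le_of_mul_le_mul_right key (by omega)
  obtain ⟨σ, hσinj, hσmem⟩ := (Finset.all_card_le_biUnion_card_iff_exists_injective t).mp hall
  refine ⟨σ, hσinj, fun j i h => ?_⟩
  have := hσmem j
  rw [ht] at this
  simp only [Finset.mem_compl, Finset.mem_image, not_exists] at this
  exact this i ⟨Finset.mem_univ i, h⟩

lemma latin_aux : ∀ d n k : ℕ, k + d = n → 1 ≤ n → ∀ hk : k ≤ n,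
    ∀ R : Fin k → Fin n → Fin n, IsLatinRectangle k n R →
    ∃ M : Fin n → Fin n → Fin n, IsLatinSquare n M ∧
      ∀ (i : Fin k) (j : Fin n), M (Fin.castLE hk i) j = R i j := by
  intro d
  induction d with
  | zero =>
    intro n k hd hn hk R hR
    subst hd
    refine ⟨fun i j => R ⟨i, i.isLt⟩ j, ⟨fun i => hR.1 _, fun j => ?_⟩, fun i j => ?_⟩
    · apply Finite.injective_iff_bijective.mp
      intro i₁ i₂ h
      have := hR.2 j h
      exact Fin.ext (congrArg Fin.val this)
    · congr 1
  | succ d ih =>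
    intro n k hd hn hk R hR
    have hkn : k < n := by omega
    obtain ⟨σ, hσinj, hσ⟩ := exists_new_row n k hkn R hR
    set R' : Fin (k + 1) → Fin n → Fin n :=
      fun i j => if h : (i : ℕ) < k then R ⟨i, h⟩ j else σ j with hR'
    have hR'rect : IsLatinRectangle (k + 1) n R' := by
      constructor
      · intro i
        by_cases h : (i : ℕ) < k
        · have : R' i = R ⟨i, h⟩ := by funext j; simp [hR', h]
          rw [this]; exact hR.1 _
        · have : R' i = σ := by funext j; simp [hR', h]
          rw [this]; exact Finite.injective_iff_bijective.mp hσinj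
      · intro j i₁ i₂ h
        simp only [hR'] at h
        by_cases h₁ : (i₁ : ℕ) < k <;> by_cases h₂ : (i₂ : ℕ) < k
        · simp only [h₁, h₂, dif_pos] at h
          have h2 := congrArg Fin.val (hR.2 j h)
          exact Fin.ext h2
        · simp only [h₁, h₂, dif_pos, dif_neg, not_false_iff] at h
          exact absurd h (hσ j _)
        · simp only [h₁, h₂, dif_pos, dif_neg, not_false_iff] at h
          exact absurd h.symm (hσ j _)
        · apply Fin.ext; omega
    obtain ⟨M, hM, hMR'⟩ := ih n (k + 1) (by omega) hn (by omega) R' hR'rect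
    refine ⟨M, hM, fun i j => ?_⟩
    have h1 : Fin.castLE hk i = Fin.castLE (show k + 1 ≤ n by omega) (Fin.castSucc i) := rfl
    rw [h1, hMR' (Fin.castSucc i) j]
    simp [hR', i.isLt]

/-- Every `k × n` Latin rectangle can be completed to a Latin square of order `n`. -/
theorem latin_rectangle_completable (n k : ℕ) (hn : 1 ≤ n) (hk : k ≤ n)
    (R : Fin k → Fin n → Fin n) (hR : IsLatinRectangle k n R) :
    ∃ M : Fin n → Fin n → Fin n, IsLatinSquare n M ∧
      ∀ (i : Fin k) (j : Fin n), M (Fin.castLE hk i) j = R i j := by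
  exact latin_aux (n - k) n k (by omega) hn hk R hR
end

section
/- Let n ≥ 1 and 0 ≤ k < n, and let R be a k × n Latin rectangle. Then the number of completions of R to a Latin square of order n is at most ∏_{ℓ=1}^{n−k} (ℓ!)^{n/ℓ}, where the exponents n/ℓ are real numbers and the inequality is between real numbers. -/
open Finset Real

section BregmanDefs

variable {α β : Type*} [Fintype α] [Fintype β] [DecidableEq α] [DecidableEq β]

/-- Finset of constrained bijections. -/
def mFinset (A : α → β → Prop) [∀ a b, Decidable (A a b)] : Finset (α ≃ β) :=
  Finset.univ.filter fun f => ∀ a, A a (f a)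

def pcount (A : α → β → Prop) [∀ a b, Decidable (A a b)] : ℕ := (mFinset A).card

lemma mem_mFinset {A : α → β → Prop} [∀ a b, Decidable (A a b)] {f : α ≃ β} :
    f ∈ mFinset A ↔ ∀ a, A a (f a) := by
  unfold mFinset
  simp

def degr (A : α → β → Prop) [∀ a b, Decidable (A a b)] (a : α) : ℕ :=
  (Finset.univ.filter fun b => A a b).card

def minor (A : α → β → Prop) (a : α) (b : β) :
    {x : α // x ≠ a} → {y : β // y ≠ b} → Prop := fun x y => A x.1 y.1

instance (A : α → β → Prop) [∀ a b, Decidable (A a b)] (a : α) (b : β) :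
    ∀ x y, Decidable (minor A a b x y) := fun x y => by unfold minor; infer_instance

def extendEquiv (a : α) (b : β) (g : {x : α // x ≠ a} ≃ {y : β // y ≠ b}) : α ≃ β where
  toFun x := if h : x = a then b else (g ⟨x, h⟩ : β)
  invFun y := if h : y = b then a else (g.symm ⟨y, h⟩ : α)
  left_inv x := by
    by_cases h : x = a
    · simp [h]
    · simp only [dif_neg h]
      rw [dif_neg (g ⟨x, h⟩).2]
      simp
  right_inv y := by
    by_cases h : y = b
    · simp [h]
    · simp only [dif_neg h]
      rw [dif_neg (g.symm ⟨y, h⟩).2]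
      simp

lemma extendEquiv_self (a : α) (b : β) (g : {x : α // x ≠ a} ≃ {y : β // y ≠ b}) :
    extendEquiv a b g a = b := by simp [extendEquiv]

lemma extendEquiv_ne (a : α) (b : β) (g : {x : α // x ≠ a} ≃ {y : β // y ≠ b})
    (x : α) (h : x ≠ a) : extendEquiv a b g x = (g ⟨x, h⟩ : β) := by
  simp [extendEquiv, h]

def fiberEquiv (A : α → β → Prop) (a : α) (b : β) (hb : A a b) :
    {f : α ≃ β // (∀ x, A x (f x)) ∧ f a = b} ≃
      {g : {x : α // x ≠ a} ≃ {y : β // y ≠ b} // ∀ x, minor A a b x (g x)} where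
  toFun := fun ⟨f, hf, hfa⟩ =>
    ⟨Equiv.subtypeEquiv f (fun x => by
        constructor
        · intro hx hfx
          exact hx (f.injective (hfx.trans hfa.symm))
        · intro hfx hx
          exact hfx (hx ▸ hfa)),
      fun x => hf x.1⟩
  invFun := fun ⟨g, hg⟩ =>
    ⟨extendEquiv a b g, ⟨fun x => by
        by_cases h : x = a
        · rw [h, extendEquiv_self]; exact hb
        · rw [extendEquiv_ne a b g x h]; exact hg ⟨x, h⟩,
      extendEquiv_self a b g⟩⟩
  left_inv := fun ⟨f, hf, hfa⟩ => by
    apply Subtype.ext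
    apply Equiv.ext
    intro x
    by_cases h : x = a
    · rw [h, extendEquiv_self]; exact hfa.symm
    · rw [extendEquiv_ne _ _ _ x h]; rfl
  right_inv := fun ⟨g, hg⟩ => by
    apply Subtype.ext
    apply Equiv.ext
    intro x
    apply Subtype.ext
    simp only [Equiv.subtypeEquiv_apply]
    exact extendEquiv_ne a b g x.1 x.2

lemma degr_minor (A : α → β → Prop) [∀ a b, Decidable (A a b)] (a : α) (b : β)
    (x : {x : α // x ≠ a}) :
    degr (minor A a b) x = degr A x.1 - (if A x.1 b then 1 else 0) := by
  unfold degr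
  have h1 : (Finset.univ.filter fun y : {y : β // y ≠ b} => minor A a b x y).card
      = Fintype.card {y : {y : β // y ≠ b} // A x.1 y.1} := by
    rw [Fintype.card_subtype]; rfl
  rw [h1, Fintype.card_congr (Equiv.subtypeSubtypeEquivSubtypeInter _ _),
    Fintype.card_subtype]
  have h2 : (Finset.univ.filter fun y : β => y ≠ b ∧ A x.1 y)
      = (Finset.univ.filter fun y : β => A x.1 y).erase b := by
    ext y
    simp [Finset.mem_erase, and_comm]
  rw [h2, Finset.card_erase_eq_ite]
  by_cases hA : A x.1 b <;> simp [hA]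

end BregmanDefs

section BregmanCount

variable {α β : Type*} [Fintype α] [Fintype β] [DecidableEq α] [DecidableEq β]
variable (A : α → β → Prop) [∀ a b, Decidable (A a b)]

lemma pcount_eq_sum_fibers (a : α) :
    pcount A = ∑ b ∈ Finset.univ.filter (fun b => A a b),
      ((mFinset A).filter fun f => f a = b).card :=
  Finset.card_eq_sum_card_fiberwise fun f hf =>
    Finset.mem_filter.mpr ⟨Finset.mem_univ _, (Finset.mem_filter.mp hf).2 a⟩

lemma fiber_card (a : α) (b : β) (hb : A a b) :
    ((mFinset A).filter fun f => f a = b).card = pcount (minor A a b) := by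
  have h1 : ((mFinset A).filter fun f => f a = b)
      = Finset.univ.filter (fun f : α ≃ β => (∀ x, A x (f x)) ∧ f a = b) := by
    ext f; simp [mFinset, and_assoc]
  rw [h1, ← Fintype.card_subtype, Fintype.card_congr (fiberEquiv A a b hb),
    Fintype.card_subtype]
  rfl

lemma prod_fiber_pow (a : α) :
    ∏ b ∈ Finset.univ.filter (fun b => A a b),
        (((mFinset A).filter fun f => f a = b).card : ℝ) ^
          (((mFinset A).filter fun f => f a = b).card) =
      ∏ σ ∈ mFinset A, (((mFinset A).filter fun f => f a = σ a).card : ℝ) := by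
  have hmap : ∀ f ∈ mFinset A, f a ∈ Finset.univ.filter (fun b => A a b) := fun f hf =>
    Finset.mem_filter.mpr ⟨Finset.mem_univ _, (Finset.mem_filter.mp hf).2 a⟩
  have h := Finset.prod_fiberwise_of_maps_to hmap
    (fun σ : α ≃ β => (((mFinset A).filter fun f' => f' a = σ a).card : ℝ))
  rw [← h]
  apply Finset.prod_congr rfl
  intro b _
  have h2 : ∀ σ ∈ (mFinset A).filter (fun f => f a = b),
      (((mFinset A).filter fun f' => f' a = σ a).card : ℝ)
        = (((mFinset A).filter fun f' => f' a = b).card : ℝ) := fun σ hσ => by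
    rw [(Finset.mem_filter.mp hσ).2]
  rw [Finset.prod_congr rfl h2, Finset.prod_const]

lemma card_filter_sigma_row (σ : α ≃ β) (hσ : σ ∈ mFinset A) (x : α) :
    ((Finset.univ.erase x).filter fun a => A x (σ a)).card = degr A x - 1 := by
  have hx : A x (σ x) := (Finset.mem_filter.mp hσ).2 x
  have h1 : ((Finset.univ.erase x).filter fun a => A x (σ a)).card
      = ((Finset.univ.filter fun b => A x b).erase (σ x)).card := by
    apply Finset.card_nbij (fun a => σ a)
    · intro a ha
      simp only [Finset.mem_filter, Finset.mem_erase, Finset.mem_univ] at *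
      have ha' : a ≠ x ∧ A x (σ a) := by simpa using ha
      show σ a ∈ ((Finset.univ.filter fun b => A x b).erase (σ x))
      exact Finset.mem_erase.mpr ⟨fun h => ha'.1 (σ.injective h),
        Finset.mem_filter.mpr ⟨Finset.mem_univ _, ha'.2⟩⟩
    · intro a _ a' _ h
      exact σ.injective h
    · intro b hb
      simp only [Finset.coe_filter, Finset.coe_erase, Set.mem_image, Set.mem_setOf_eq,
        Set.mem_diff, Finset.mem_coe, Finset.mem_erase, Finset.mem_filter,
        Finset.mem_univ, Finset.coe_univ, Set.mem_singleton_iff] at *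
      refine ⟨σ.symm b, ⟨⟨fun h => ?_, trivial⟩, by simp [hb.1.2]⟩, by simp⟩
      · apply hb.2
        rw [← h]; simp
  rw [h1, Finset.card_erase_of_mem]
  · rfl
  · simp [hx]

lemma degr_pos (σ : α ≃ β) (hσ : σ ∈ mFinset A) (x : α) : 1 ≤ degr A x := by
  have hx : A x (σ x) := (Finset.mem_filter.mp hσ).2 x
  rw [← Finset.card_singleton (σ x)]
  apply Finset.card_le_card
  intro y hy
  simp at hy
  simp [hy, hx]

end BregmanCount
lemma pow_sum_le_card_pow_mul_prod {ι : Type*} (s : Finset ι) (t : ι → ℕ) :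
    ((∑ i ∈ s, t i : ℕ) : ℝ) ^ (∑ i ∈ s, t i) ≤
      (s.card : ℝ) ^ (∑ i ∈ s, t i) * ∏ i ∈ s, (t i : ℝ) ^ (t i) := by
  set T : ℕ := ∑ i ∈ s, t i with hT
  rcases Nat.eq_zero_or_pos T with h0 | hpos
  · have hz : ∀ i ∈ s, t i = 0 := by
      rw [← Finset.sum_eq_zero_iff]; omega
    have : ∏ i ∈ s, (t i : ℝ) ^ (t i) = 1 := by
      apply Finset.prod_eq_one
      intro i hi; rw [hz i hi]; norm_num
    simp [h0, this]
  · set s' : Finset ι := s.filter (fun i => t i ≠ 0) with hs'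
    have hsub : s' ⊆ s := Finset.filter_subset _ s
    have hsum' : ∑ i ∈ s', t i = T := by
      rw [hs', hT]; exact Finset.sum_filter_ne_zero s
    have hcard' : 0 < s'.card := by
      rw [Finset.card_pos]
      by_contra h
      rw [Finset.not_nonempty_iff_eq_empty] at h
      rw [h] at hsum'; simp at hsum'; omega
    have hTpos : (0:ℝ) < T := by exact_mod_cast hpos
    have hti : ∀ i ∈ s', (0:ℝ) < t i := by
      intro i hi
      have h2 := (Finset.mem_filter.mp hi).2
      have : 0 < t i := Nat.pos_of_ne_zero h2
      exact_mod_cast this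
    have hc' : (0:ℝ) < s'.card := by exact_mod_cast hcard'
    have hc : (0:ℝ) < s.card := by
      have : 0 < s.card := lt_of_lt_of_le hcard' (Finset.card_le_card hsub)
      exact_mod_cast this
    set P : ℝ := ∏ i ∈ s', (t i : ℝ) ^ ((t i : ℝ) / T) with hPdef
    have hP : 0 < P :=
      Finset.prod_pos fun i hi => Real.rpow_pos_of_pos (hti i hi) _
    -- weighted AM-GM on reciprocals
    have key : (T : ℝ) / s.card ≤ P := by
      have hw : ∀ i ∈ s', (0:ℝ) ≤ (t i : ℝ) / T := fun i _ => by positivity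
      have hw' : ∑ i ∈ s', (t i : ℝ) / T = 1 := by
        rw [← Finset.sum_div, div_eq_one_iff_eq hTpos.ne']
        exact_mod_cast hsum'
      have hzz : ∀ i ∈ s', (0:ℝ) ≤ ((t i : ℝ))⁻¹ := fun i _ => by positivity
      have h1 := Real.geom_mean_le_arith_mean_weighted s' (fun i => (t i : ℝ) / T)
        (fun i => ((t i : ℝ))⁻¹) hw hw' hzz
      have hrhs : ∑ i ∈ s', (t i : ℝ) / T * ((t i : ℝ))⁻¹ = s'.card / T := by
        rw [Finset.sum_congr rfl (g := fun i => (1:ℝ)/T) (fun i hi => by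
          have hne : (t i : ℝ) ≠ 0 := (hti i hi).ne'
          field_simp)]
        rw [Finset.sum_const]
        push_cast; ring
      have hlhs : ∏ i ∈ s', (((t i : ℝ))⁻¹) ^ ((t i : ℝ) / T) = P⁻¹ := by
        rw [hPdef, ← Finset.prod_inv_distrib]
        exact Finset.prod_congr rfl fun i hi => Real.inv_rpow (hti i hi).le _
      rw [hrhs, hlhs] at h1
      have h2 : ((s'.card:ℝ)/T)⁻¹ ≤ P := by
        have h3 := inv_anti₀ (by positivity) h1
        rwa [inv_inv] at h3
      rw [inv_div] at h2
      calc (T:ℝ) / s.card ≤ (T:ℝ) / s'.card := by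
            apply div_le_div_of_nonneg_left hTpos.le hc'
            exact_mod_cast Finset.card_le_card hsub
        _ ≤ P := h2
    -- raise to the T-th power
    have hpow : ((T:ℝ) / s.card) ^ T ≤ P ^ T := pow_le_pow_left₀ (by positivity) key T
    have hprods : ∏ i ∈ s, (t i:ℝ)^(t i) = ∏ i ∈ s', (t i:ℝ)^(t i) := by
      refine (Finset.prod_subset hsub ?_).symm
      intro i his hnot
      have h4 : t i = 0 := by
        by_contra h5
        exact hnot (Finset.mem_filter.mpr ⟨his, h5⟩)
      simp [h4]
    have hPT : P ^ T = ∏ i ∈ s, (t i : ℝ) ^ (t i) := by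
      rw [hPdef, ← Finset.prod_pow, hprods]
      apply Finset.prod_congr rfl
      intro i hi
      rw [← Real.rpow_natCast ((t i : ℝ) ^ ((t i : ℝ)/T)) T, ← Real.rpow_mul (hti i hi).le,
        div_mul_cancel₀ _ hTpos.ne', Real.rpow_natCast]
    rw [hPT] at hpow
    calc (T:ℝ)^T = ((T / s.card) * s.card)^T := by rw [div_mul_cancel₀ _ hc.ne']
      _ = ((T:ℝ)/s.card)^T * (s.card:ℝ)^T := mul_pow _ _ _
      _ ≤ (∏ i ∈ s, (t i:ℝ)^(t i)) * (s.card:ℝ)^T :=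
          mul_le_mul_of_nonneg_right hpow (by positivity)
      _ = (s.card : ℝ) ^ T * ∏ i ∈ s, (t i : ℝ) ^ (t i) := mul_comm _ _

lemma fact_rpow_pow (m : ℕ) : ((m.factorial : ℝ) ^ (1/(m:ℝ)))^m = (m.factorial : ℝ) := by
  rcases Nat.eq_zero_or_pos m with h | h
  · simp [h]
  · have hm : (m:ℝ) ≠ 0 := by positivity
    rw [← Real.rpow_natCast ((m.factorial : ℝ) ^ (1/(m:ℝ))) m,
      ← Real.rpow_mul (by positivity), one_div, inv_mul_cancel₀ hm, Real.rpow_one]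

lemma rpow_pow (x : ℝ) (hx : 0 ≤ x) (c : ℝ) (k : ℕ) :
    (x ^ c) ^ k = x ^ (c * k) := by
  rw [← Real.rpow_natCast (x ^ c) k, ← Real.rpow_mul hx]

theorem bregman_bound : ∀ (n : ℕ) {α β : Type*} [Fintype α] [Fintype β]
    [DecidableEq α] [DecidableEq β] (A : α → β → Prop) [∀ a b, Decidable (A a b)],
    Fintype.card α = n →
    (pcount A : ℝ) ≤ ∏ a : α, ((degr A a).factorial : ℝ) ^ (1 / (degr A a : ℝ)) := by
  intro n
  induction n using Nat.strong_induction_on with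
  | _ n ih =>
    intro α β _ _ _ _ A _ hcard
    have htarget_nonneg : (0:ℝ) ≤ ∏ a : α, ((degr A a).factorial : ℝ) ^ (1 / (degr A a : ℝ)) :=
      Finset.prod_nonneg fun a _ => Real.rpow_nonneg (Nat.cast_nonneg _) _
    by_cases hN0 : pcount A = 0
    · rw [hN0]; exact_mod_cast htarget_nonneg
    have hNpos : 0 < pcount A := Nat.pos_of_ne_zero hN0
    obtain ⟨σ₀, hσ₀⟩ : (mFinset A).Nonempty := Finset.card_pos.mp hNpos
    rcases Nat.eq_zero_or_pos n with hn0 | hnpos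
    · -- empty α
      have hem : IsEmpty α := Fintype.card_eq_zero_iff.mp (hcard.trans hn0)
      have h1 : pcount A ≤ 1 := by
        have hsub : Subsingleton (α ≃ β) :=
          ⟨fun f g => Equiv.ext fun x => (hem.false x).elim⟩
        calc pcount A ≤ (Finset.univ : Finset (α ≃ β)).card := Finset.card_le_card
              (Finset.filter_subset _ _)
          _ = Fintype.card (α ≃ β) := rfl
          _ ≤ 1 := Fintype.card_le_one_iff_subsingleton.mpr hsub
      have h2 : ∏ a : α, ((degr A a).factorial : ℝ) ^ (1 / (degr A a : ℝ)) = 1 := by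
        rw [Finset.univ_eq_empty, Finset.prod_empty]
      rw [h2]
      exact_mod_cast h1
    -- main case
    have hβ : Fintype.card β = n := by rw [← Fintype.card_congr σ₀, hcard]
    set N := pcount A with hNdef
    set d := degr A with hddef
    have hd1 : ∀ x, 1 ≤ d x := degr_pos A σ₀ hσ₀
    have hdn : ∀ x, d x ≤ n := fun x => by
      rw [← hβ]
      exact Finset.card_le_card (Finset.filter_subset _ _)
    set m : α → β → ℕ := fun a b => ((mFinset A).filter fun f => f a = b).card with hmdef
    -- Step A
    have stepA : ∀ a : α, (N:ℝ)^N ≤ (d a : ℝ)^N *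
        ∏ b ∈ Finset.univ.filter (fun b => A a b), (m a b : ℝ)^(m a b) := by
      intro a
      have h := pow_sum_le_card_pow_mul_prod (Finset.univ.filter (fun b => A a b))
        (fun b => m a b)
      rw [show ∑ b ∈ Finset.univ.filter (fun b => A a b), m a b = N from
        (pcount_eq_sum_fibers A a).symm] at h
      exact h
    -- product over all rows
    have chain1 : (N:ℝ)^(n*N) ≤ (∏ a : α, (d a : ℝ))^N *
        ∏ σ ∈ mFinset A, ∏ a : α, (m a (σ a) : ℝ) := by
      calc (N:ℝ)^(n*N) = ∏ _a : α, (N:ℝ)^N := by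
            rw [Finset.prod_const, ← pow_mul, Finset.card_univ, hcard, Nat.mul_comm]
        _ ≤ ∏ a : α, ((d a : ℝ)^N *
              ∏ b ∈ Finset.univ.filter (fun b => A a b), (m a b : ℝ)^(m a b)) := by
            apply Finset.prod_le_prod (fun a _ => by positivity) (fun a _ => stepA a)
        _ = (∏ a : α, (d a : ℝ))^N *
              ∏ a : α, ∏ b ∈ Finset.univ.filter (fun b => A a b), (m a b : ℝ)^(m a b) := by
            rw [Finset.prod_mul_distrib, Finset.prod_pow]
        _ = (∏ a : α, (d a : ℝ))^N * ∏ σ ∈ mFinset A, ∏ a : α, (m a (σ a) : ℝ) := by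
            congr 1
            rw [← Finset.prod_comm]
            exact Finset.prod_congr rfl fun a _ => prod_fiber_pow A a
    -- Step B : bound the inner product for each σ via the induction hypothesis
    set Q : ℝ := ∏ y : α, ((d y - 1).factorial : ℝ) *
      ((d y).factorial : ℝ) ^ ((1/(d y : ℝ)) * ((n - d y : ℕ) : ℝ)) with hQdef
    have hcardsub : ∀ a : α, Fintype.card {x : α // x ≠ a} = n - 1 := by
      intro a
      have : Fintype.card {x : α // ¬ x = a} = Fintype.card α - Fintype.card {x : α // x = a} :=
        Fintype.card_subtype_compl _
      rw [Fintype.card_subtype_eq, hcard] at this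
      exact this
    have hminor : ∀ σ ∈ mFinset A, ∀ a : α,
        (pcount (minor A a (σ a)) : ℝ) ≤ ∏ y ∈ Finset.univ.erase a,
          ((d y - (if A y (σ a) then 1 else 0)).factorial : ℝ) ^
            (1/((d y - if A y (σ a) then 1 else 0 : ℕ) : ℝ)) := by
      intro σ hσ a
      have h := ih (n-1) (by omega) (minor A a (σ a)) (hcardsub a)
      refine h.trans (le_of_eq ?_)
      rw [Finset.prod_subtype (p := fun x => x ≠ a) (Finset.univ.erase a)
        (fun x => by simp) (fun y =>
          ((d y - (if A y (σ a) then 1 else 0)).factorial : ℝ) ^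
            (1/((d y - if A y (σ a) then 1 else 0 : ℕ) : ℝ)))]
      apply Finset.prod_congr rfl
      intro x _
      rw [degr_minor A a (σ a) x]
    have hrow : ∀ σ ∈ mFinset A, ∏ a : α, (m a (σ a) : ℝ) ≤ Q := by
      intro σ hσ
      have hAσ : ∀ a, A a (σ a) := fun a => (Finset.mem_filter.mp hσ).2 a
      have step1 : ∏ a : α, (m a (σ a) : ℝ) = ∏ a : α, (pcount (minor A a (σ a)) : ℝ) := by
        apply Finset.prod_congr rfl
        intro a _
        exact congrArg (fun k : ℕ => (k : ℝ)) (fiber_card A a (σ a) (hAσ a))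
      rw [step1]
      have step2 : ∏ a : α, (pcount (minor A a (σ a)) : ℝ) ≤
          ∏ a : α, ∏ y ∈ Finset.univ.erase a,
            ((d y - (if A y (σ a) then 1 else 0)).factorial : ℝ) ^
              (1/((d y - if A y (σ a) then 1 else 0 : ℕ) : ℝ)) :=
        Finset.prod_le_prod (fun a _ => by positivity) (fun a _ => hminor σ hσ a)
      refine step2.trans (le_of_eq ?_)
      rw [Finset.prod_comm' (t' := Finset.univ) (s' := fun y => Finset.univ.erase y)
        (fun x y => by simp [ne_comm, eq_comm, and_comm])]
      apply Finset.prod_congr rfl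
      intro y _
      -- split the inner product according to whether A y (σ a)
      have hsplit : ∀ a ∈ Finset.univ.erase y,
          ((d y - (if A y (σ a) then 1 else 0)).factorial : ℝ) ^
              (1/((d y - if A y (σ a) then 1 else 0 : ℕ) : ℝ)) =
            if A y (σ a) then ((d y - 1).factorial : ℝ) ^ (1/((d y - 1 : ℕ) : ℝ))
              else ((d y).factorial : ℝ) ^ (1/((d y : ℕ) : ℝ)) := by
        intro a _
        by_cases h : A y (σ a) <;> simp [h]
      rw [Finset.prod_congr rfl hsplit, Finset.prod_ite, Finset.prod_const, Finset.prod_const,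
        card_filter_sigma_row A σ hσ y]
      have hcf : ((Finset.univ.erase y).filter fun a => ¬ A y (σ a)).card = n - d y := by
        have h1 := Finset.card_filter_add_card_filter_not
          (s := Finset.univ.erase y) (p := fun a => A y (σ a))
        rw [card_filter_sigma_row A σ hσ y, Finset.card_erase_of_mem (Finset.mem_univ y),
          Finset.card_univ, hcard] at h1
        have h2 : degr A y = d y := rfl
        have h3 := hd1 y
        have h4 := hdn y
        omega
      rw [hcf, fact_rpow_pow (d y - 1),
        rpow_pow _ (by positivity) _ (n - d y)]
    -- combine
    have chain2 : (N:ℝ)^(n*N) ≤ (∏ a : α, (d a : ℝ))^N * Q^N := by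
      refine chain1.trans ?_
      apply mul_le_mul_of_nonneg_left _ (by positivity)
      calc ∏ σ ∈ mFinset A, ∏ a : α, (m a (σ a) : ℝ)
          ≤ ∏ _σ ∈ mFinset A, Q := Finset.prod_le_prod
            (fun σ _ => Finset.prod_nonneg fun a _ => by positivity)
            (fun σ hσ => hrow σ hσ)
        _ = Q^N := by rw [Finset.prod_const]; rfl
    -- final algebra
    set T : α → ℝ := fun a => ((d a).factorial : ℝ) ^ (1 / (d a : ℝ)) with hTdef
    have hfactor : ∀ a : α, (d a : ℝ) * (((d a - 1).factorial : ℝ) *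
        ((d a).factorial : ℝ) ^ ((1/(d a : ℝ)) * ((n - d a : ℕ) : ℝ))) = (T a)^n := by
      intro a
      have hd0 : (d a : ℝ) ≠ 0 := by
        have := hd1 a; positivity
      have hfac : (d a : ℝ) * ((d a - 1).factorial : ℝ) = ((d a).factorial : ℝ) := by
        rw [← Nat.cast_mul, Nat.mul_factorial_pred (by have := hd1 a; omega)]
      rw [hTdef, rpow_pow _ (by positivity) _ n, ← mul_assoc, hfac]
      have hexp : (1/(d a : ℝ)) * (n : ℝ) = 1 + (1/(d a : ℝ)) * ((n - d a : ℕ) : ℝ) := by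
        rw [Nat.cast_sub (hdn a)]
        field_simp
        ring
      rw [hexp, Real.rpow_add (by positivity : (0:ℝ) < ((d a).factorial : ℝ)), Real.rpow_one]
    have hfinal : (∏ a : α, (d a : ℝ))^N * Q^N = (∏ a : α, T a)^(n*N) := by
      rw [← mul_pow, ← Finset.prod_mul_distrib, pow_mul]
      congr 1
      rw [← Finset.prod_pow]
      exact Finset.prod_congr rfl fun a _ => hfactor a
    rw [hfinal] at chain2
    have hTnn : (0:ℝ) ≤ ∏ a : α, T a := Finset.prod_nonneg fun a _ => by positivity
    have := (pow_le_pow_iff_left₀ (by positivity : (0:ℝ) ≤ (N:ℝ)) hTnn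
      (by positivity : n*N ≠ 0)).mp chain2
    exact this

section Latin

/-- availability relation: column `j` can still receive symbol `s`. -/
def availRel (n k : ℕ) (R : Fin k → Fin n → Fin n) : Fin n → Fin n → Prop :=
  fun j s => ∀ i, R i j ≠ s

instance (n k : ℕ) (R : Fin k → Fin n → Fin n) : ∀ j s, Decidable (availRel n k R j s) :=
  fun j s => by unfold availRel; infer_instance

lemma degr_availRel (n k : ℕ) (hk : k ≤ n) (R : Fin k → Fin n → Fin n)
    (hR : IsLatinRectangle k n R) (j : Fin n) : degr (availRel n k R) j = n - k := by
  unfold degr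
  have h1 : (Finset.univ.filter fun s : Fin n => ¬ availRel n k R j s)
      = Finset.univ.image (fun i : Fin k => R i j) := by
    ext s
    simp only [Finset.mem_filter, Finset.mem_univ, true_and, Finset.mem_image, availRel]
    push_neg
    simp
  have h2 : (Finset.univ.image (fun i : Fin k => R i j)).card = k := by
    rw [Finset.card_image_of_injective _ (hR.2 j), Finset.card_univ, Fintype.card_fin]
  have h3 := Finset.card_filter_add_card_filter_not
    (s := (Finset.univ : Finset (Fin n))) (p := fun s => availRel n k R j s)
  rw [h1, h2, Finset.card_univ, Fintype.card_fin] at h3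
  omega

lemma snoc_latin (n k : ℕ) (hk : k < n) (R : Fin k → Fin n → Fin n)
    (hR : IsLatinRectangle k n R) (g : Fin n → Fin n) (hg : Function.Bijective g)
    (hava : ∀ j i, R i j ≠ g j) : IsLatinRectangle (k+1) n (Fin.snoc R g) := by
  constructor
  · intro i
    refine Fin.lastCases ?_ ?_ i
    · rw [show (Fin.snoc R g : Fin (k+1) → Fin n → Fin n) (Fin.last k) = g from
        Fin.snoc_last _ _]
      exact hg
    · intro i'
      rw [show (Fin.snoc R g : Fin (k+1) → Fin n → Fin n) i'.castSucc = R i' from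
        Fin.snoc_castSucc _ _ _]
      exact hR.1 i'
  · intro j a b
    refine Fin.lastCases ?_ (fun a' => ?_) a <;> refine Fin.lastCases ?_ (fun b' => ?_) b <;>
      intro h <;> simp only [Fin.snoc_last, Fin.snoc_castSucc] at h
    · rfl
    · exact absurd h.symm (hava j b')
    · exact absurd h (hava j a')
    · rw [hR.2 j h]

end Latin

instance latinDec (n : ℕ) : ∀ M : Fin n → Fin n → Fin n, Decidable (IsLatinSquare n M) :=
  fun M => by unfold IsLatinSquare; infer_instance

lemma completions_bound (m : ℕ) : ∀ (n k : ℕ) (hk : k ≤ n), n - k = m →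
    ∀ (R : Fin k → Fin n → Fin n), IsLatinRectangle k n R →
    (Nat.card {M : Fin n → Fin n → Fin n // IsLatinSquare n M ∧
        ∀ (i : Fin k) (j : Fin n), M (Fin.castLE hk i) j = R i j} : ℝ) ≤
      ∏ ℓ ∈ Finset.Icc 1 m, (Nat.factorial ℓ : ℝ) ^ ((n : ℝ) / (ℓ : ℝ)) := by
  induction m with
  | zero =>
    intro n k hk hm R hR
    have hkn : k = n := by omega
    have hsub : Subsingleton {M : Fin n → Fin n → Fin n // IsLatinSquare n M ∧
        ∀ (i : Fin k) (j : Fin n), M (Fin.castLE hk i) j = R i j} := by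
      constructor
      rintro ⟨M, _, hM2⟩ ⟨M', _, hM2'⟩
      apply Subtype.ext
      funext i j
      have hi : (i : ℕ) < k := by omega
      have hcast : Fin.castLE hk ⟨i.1, hi⟩ = i := by
        apply Fin.ext; rfl
      simp only
      rw [← hcast, hM2 ⟨i.1, hi⟩ j, hM2' ⟨i.1, hi⟩ j]
    have h1 : Nat.card {M : Fin n → Fin n → Fin n // IsLatinSquare n M ∧
        ∀ (i : Fin k) (j : Fin n), M (Fin.castLE hk i) j = R i j} ≤ 1 := by
      rw [Nat.card_eq_fintype_card]
      exact Fintype.card_le_one_iff_subsingleton.mpr hsub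
    have hIcc : Finset.Icc 1 0 = (∅ : Finset ℕ) := Finset.Icc_eq_empty (by norm_num)
    rw [hIcc, Finset.prod_empty]
    exact_mod_cast h1
  | succ m ihm =>
    intro n k hk hm R hR
    have hklt : k < n := by omega
    haveI : NeZero n := ⟨by omega⟩
    have hk1 : k + 1 ≤ n := hklt
    set E : Finset (Fin n → Fin n) := Finset.univ.filter
      (fun g => Function.Bijective g ∧ ∀ (j : Fin n) (i : Fin k), R i j ≠ g j) with hEdef
    set C : Finset (Fin n → Fin n → Fin n) := Finset.univ.filter
      (fun M => IsLatinSquare n M ∧ ∀ (i : Fin k) (j : Fin n),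
        M (Fin.castLE hk i) j = R i j) with hCdef
    have hNC : Nat.card {M : Fin n → Fin n → Fin n // IsLatinSquare n M ∧
        ∀ (i : Fin k) (j : Fin n), M (Fin.castLE hk i) j = R i j} = C.card := by
      rw [Nat.card_eq_fintype_card]
      exact Fintype.card_subtype _
    have hmap : ∀ M ∈ C, M ⟨k, hklt⟩ ∈ E := by
      intro M hM
      rw [hCdef] at hM
      obtain ⟨hM1, hM2⟩ := (Finset.mem_filter.mp hM).2
      rw [hEdef, Finset.mem_filter]
      refine ⟨Finset.mem_univ _, hM1.1 _, ?_⟩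
      intro j i heq
      have hne : Fin.castLE hk i ≠ ⟨k, hklt⟩ := by
        have hi := i.isLt
        intro hc
        have hval : (i : ℕ) = k := congrArg Fin.val hc
        rw [hval] at hi
        exact Nat.lt_irrefl k hi
      exact hne ((hM1.2 j).1 ((hM2 i j).trans heq))
    have hfib := Finset.card_eq_sum_card_fiberwise hmap
    have hfibsub : ∀ g ∈ E, (C.filter fun M => M ⟨k, hklt⟩ = g).card ≤
        (Finset.univ.filter (fun M : Fin n → Fin n → Fin n => IsLatinSquare n M ∧
          ∀ (i : Fin (k+1)) (j : Fin n),
            M (Fin.castLE hk1 i) j = (Fin.snoc R g : Fin (k+1) → Fin n → Fin n) i j)).card := by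
      intro g _
      apply Finset.card_le_card
      intro M hM
      rw [Finset.mem_filter] at hM
      obtain ⟨hMC, hrow⟩ := hM
      rw [hCdef, Finset.mem_filter] at hMC
      obtain ⟨_, hM1, hM2⟩ := hMC
      rw [Finset.mem_filter]
      refine ⟨Finset.mem_univ _, hM1, ?_⟩
      intro i j
      refine Fin.lastCases ?_ (fun i' => ?_) i
      · have hc : Fin.castLE hk1 (Fin.last k) = ⟨k, hklt⟩ := by apply Fin.ext; rfl
        rw [hc, Fin.snoc_last, ← hrow]
      · have hc : Fin.castLE hk1 i'.castSucc = Fin.castLE hk i' := by apply Fin.ext; rfl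
        rw [hc, Fin.snoc_castSucc]
        exact hM2 i' j
    -- each extended rectangle is Latin, apply induction hypothesis
    have hext : ∀ g ∈ E,
        ((Finset.univ.filter (fun M : Fin n → Fin n → Fin n => IsLatinSquare n M ∧
          ∀ (i : Fin (k+1)) (j : Fin n),
            M (Fin.castLE hk1 i) j = (Fin.snoc R g : Fin (k+1) → Fin n → Fin n) i j)).card : ℝ) ≤
        ∏ ℓ ∈ Finset.Icc 1 m, (Nat.factorial ℓ : ℝ) ^ ((n : ℝ) / (ℓ : ℝ)) := by
      intro g hg
      rw [hEdef, Finset.mem_filter] at hg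
      have hlat := snoc_latin n k hklt R hR g hg.2.1 hg.2.2
      have hm' : n - (k+1) = m := by rw [← Nat.sub_sub, hm, Nat.add_sub_cancel]
      have h := ihm n (k+1) hk1 hm' (Fin.snoc R g) hlat
      rw [Nat.card_eq_fintype_card, Fintype.card_subtype] at h
      exact h
    -- the number of admissible new rows, via Bregman
    have hEcard : E.card = pcount (availRel n k R) := by
      apply Finset.card_bij' (fun g hg => Equiv.ofBijective g
          (by rw [hEdef] at hg; exact (Finset.mem_filter.mp hg).2.1))
        (fun f _ => ⇑f)
      case hi =>
        intro g hg
        rw [hEdef, Finset.mem_filter] at hg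
        rw [mem_mFinset]
        exact fun j i => hg.2.2 j i
      case hj =>
        intro f hf
        rw [mem_mFinset] at hf
        rw [hEdef, Finset.mem_filter]
        exact ⟨Finset.mem_univ _, f.bijective, fun j i => hf j i⟩
      case left_inv => intro g hg; rfl
      case right_inv => intro f hf; apply Equiv.ext; intro x; rfl
    have hbreg : ((E.card : ℕ) : ℝ) ≤
        ((m+1).factorial : ℝ) ^ ((n : ℝ) / ((m+1 : ℕ) : ℝ)) := by
      rw [hEcard]
      have h := bregman_bound n (availRel n k R) (Fintype.card_fin n)
      have hdeg : ∀ j : Fin n, degr (availRel n k R) j = m + 1 := by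
        intro j
        rw [degr_availRel n k hk R hR j]; exact hm
      calc (pcount (availRel n k R) : ℝ)
          ≤ ∏ j : Fin n, ((degr (availRel n k R) j).factorial : ℝ) ^
              (1 / (degr (availRel n k R) j : ℝ)) := h
        _ = ∏ _j : Fin n, (((m+1 : ℕ)).factorial : ℝ) ^ (1 / ((m+1 : ℕ) : ℝ)) := by
            apply Finset.prod_congr rfl
            intro j _
            rw [hdeg j]
        _ = (((m+1 : ℕ)).factorial : ℝ) ^ ((n : ℝ) / ((m+1 : ℕ) : ℝ)) := by
            rw [Finset.prod_const, Finset.card_univ, Fintype.card_fin,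
              rpow_pow _ (by positivity) _ n, one_div, inv_mul_eq_div]
    -- assemble
    have hRHSm_nonneg : (0:ℝ) ≤ ∏ ℓ ∈ Finset.Icc 1 m, (Nat.factorial ℓ : ℝ) ^ ((n : ℝ) / (ℓ : ℝ)) :=
      Finset.prod_nonneg fun ℓ _ => Real.rpow_nonneg (Nat.cast_nonneg _) _
    rw [hNC]
    calc (C.card : ℝ)
        = ∑ g ∈ E, ((C.filter fun M => M ⟨k, hklt⟩ = g).card : ℝ) := by
          rw [hfib]; push_cast; ring
      _ ≤ ∑ g ∈ E, ∏ ℓ ∈ Finset.Icc 1 m, (Nat.factorial ℓ : ℝ) ^ ((n : ℝ) / (ℓ : ℝ)) := by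
          apply Finset.sum_le_sum
          intro g hg
          calc ((C.filter fun M => M ⟨k, hklt⟩ = g).card : ℝ)
              ≤ _ := by exact_mod_cast hfibsub g hg
            _ ≤ _ := hext g hg
      _ = (E.card : ℝ) * ∏ ℓ ∈ Finset.Icc 1 m, (Nat.factorial ℓ : ℝ) ^ ((n : ℝ) / (ℓ : ℝ)) := by
          rw [Finset.sum_const, nsmul_eq_mul]
      _ ≤ ((m+1).factorial : ℝ) ^ ((n : ℝ) / ((m+1 : ℕ) : ℝ)) *
            ∏ ℓ ∈ Finset.Icc 1 m, (Nat.factorial ℓ : ℝ) ^ ((n : ℝ) / (ℓ : ℝ)) :=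
          mul_le_mul_of_nonneg_right hbreg hRHSm_nonneg
      _ = ∏ ℓ ∈ Finset.Icc 1 (m+1), (Nat.factorial ℓ : ℝ) ^ ((n : ℝ) / (ℓ : ℝ)) := by
          rw [Finset.prod_Icc_succ_top (Nat.succ_le_succ (Nat.zero_le m))]
          push_cast
          ring

/-- The number of completions of a `k × n` Latin rectangle to a Latin square of
order `n` is at most `∏_{ℓ=1}^{n-k} (ℓ!)^{n/ℓ}` (real exponents). -/
theorem latin_rectangle_completions_upper_bound (n k : ℕ) (hn : 1 ≤ n) (hk : k < n)
    (R : Fin k → Fin n → Fin n) (hR : IsLatinRectangle k n R) :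
    (Nat.card {M : Fin n → Fin n → Fin n // IsLatinSquare n M ∧
        ∀ (i : Fin k) (j : Fin n), M (Fin.castLE hk.le i) j = R i j} : ℝ) ≤
      ∏ ℓ ∈ Finset.Icc 1 (n - k), (Nat.factorial ℓ : ℝ) ^ ((n : ℝ) / (ℓ : ℝ)) :=
  completions_bound (n - k) n k hk.le rfl R hR
end

section
/- Let n ≥ 3 and let R be an (n−3) × n Latin rectangle. Then the number of completions of R to a Latin square of order n is at most 6^{n/3} · 2^{n/2}, where the exponents are real numbers and the inequality is between real numbers. -/
namespace LatinAux

variable {n : ℕ}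

/-- Functions `f : Fin n → Fin n` that map `I` bijectively onto `K` with `f i ∈ R i`,
and are the identity off `I`. -/
noncomputable def sdr (I K : Finset (Fin n)) (R : Fin n → Finset (Fin n)) :
    Finset (Fin n → Fin n) :=
  @Finset.filter _
    (fun f => (∀ i ∈ I, f i ∈ R i ∩ K) ∧ (∀ i ∉ I, f i = i) ∧ Set.InjOn f I)
    (Classical.decPred _) Finset.univ

lemma mem_sdr {I K : Finset (Fin n)} {R : Fin n → Finset (Fin n)} {f : Fin n → Fin n} :
    f ∈ sdr I K R ↔
      (∀ i ∈ I, f i ∈ R i ∩ K) ∧ (∀ i ∉ I, f i = i) ∧ Set.InjOn f I := by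
  simp [sdr]

lemma sdr_card_empty (K : Finset (Fin n)) (R : Fin n → Finset (Fin n)) :
    (sdr ∅ K R).card ≤ 1 := by
  apply Finset.card_le_one.2
  intro f hf g hg
  rw [mem_sdr] at hf hg
  funext i
  rw [hf.2.1 i (by simp), hg.2.1 i (by simp)]

lemma image_sdr {I K : Finset (Fin n)} {R : Fin n → Finset (Fin n)} {f : Fin n → Fin n}
    (hf : f ∈ sdr I K R) (h : I.card = K.card) : I.image f = K := by
  rw [mem_sdr] at hf
  apply Finset.eq_of_subset_of_card_le
  · intro k hk
    obtain ⟨i, hi, rfl⟩ := Finset.mem_image.1 hk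
    exact (Finset.mem_inter.1 (hf.1 i hi)).2
  · rw [Finset.card_image_of_injOn hf.2.2, h]

lemma fiber_card {I K : Finset (Fin n)} {R : Fin n → Finset (Fin n)} {i0 k0 : Fin n}
    (hi0 : i0 ∈ I) (hk0 : k0 ∈ R i0 ∩ K) :
    ((sdr I K R).filter (fun f => f i0 = k0)).card
      = (sdr (I.erase i0) (K.erase k0) R).card := by
  classical
  refine Finset.card_bij' (fun f _ => Function.update f i0 i0)
    (fun g _ => Function.update g i0 k0) ?_ ?_ ?_ ?_
  · intro f hf
    simp only [Finset.mem_filter] at hf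
    obtain ⟨hf, hfi0⟩ := hf
    rw [mem_sdr] at hf
    rw [mem_sdr]
    refine ⟨?_, ?_, ?_⟩
    · intro i hi
      rw [Finset.mem_erase] at hi
      rw [Function.update_of_ne hi.1]
      have h1 := hf.1 i hi.2
      rw [Finset.mem_inter] at h1 ⊢
      refine ⟨h1.1, Finset.mem_erase.2 ⟨?_, h1.2⟩⟩
      intro h
      exact hi.1 (hf.2.2 (by exact_mod_cast hi.2) (by exact_mod_cast hi0) (h.trans hfi0.symm))
    · intro i hi
      rcases eq_or_ne i i0 with rfl | hne
      · simp
      · rw [Function.update_of_ne hne]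
        exact hf.2.1 i (fun h => hi (Finset.mem_erase.2 ⟨hne, h⟩))
    · intro x hx y hy hxy
      simp only [Finset.coe_erase, Set.mem_diff, Set.mem_singleton_iff] at hx hy
      rw [Function.update_of_ne hx.2, Function.update_of_ne hy.2] at hxy
      exact hf.2.2 hx.1 hy.1 hxy
  · intro g hg
    rw [mem_sdr] at hg
    simp only [Finset.mem_filter]
    constructor
    · rw [mem_sdr]
      refine ⟨?_, ?_, ?_⟩
      · intro i hi
        rcases eq_or_ne i i0 with rfl | hne
        · simpa using hk0
        · rw [Function.update_of_ne hne]
          have := hg.1 i (Finset.mem_erase.2 ⟨hne, hi⟩)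
          rw [Finset.mem_inter] at this ⊢
          exact ⟨this.1, Finset.mem_of_mem_erase this.2⟩
      · intro i hi
        have hne : i ≠ i0 := fun h => hi (h ▸ hi0)
        rw [Function.update_of_ne hne]
        exact hg.2.1 i (fun h => hi (Finset.mem_of_mem_erase h))
      · intro x hx y hy hxy
        rcases eq_or_ne x i0 with rfl | hxne
        · rcases eq_or_ne y x with rfl | hyne
          · rfl
          · exfalso
            rw [Function.update_self, Function.update_of_ne hyne] at hxy
            have := hg.1 y (Finset.mem_erase.2 ⟨hyne, by exact_mod_cast hy⟩)
            rw [Finset.mem_inter] at this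
            exact (Finset.mem_erase.1 this.2).1 hxy.symm
        · rcases eq_or_ne y i0 with rfl | hyne
          · exfalso
            rw [Function.update_self, Function.update_of_ne hxne] at hxy
            have := hg.1 x (Finset.mem_erase.2 ⟨hxne, by exact_mod_cast hx⟩)
            rw [Finset.mem_inter] at this
            exact (Finset.mem_erase.1 this.2).1 hxy
          · rw [Function.update_of_ne hxne, Function.update_of_ne hyne] at hxy
            have hx' : x ∈ I.erase i0 := Finset.mem_erase.2 ⟨hxne, by exact_mod_cast hx⟩
            have hy' : y ∈ I.erase i0 := Finset.mem_erase.2 ⟨hyne, by exact_mod_cast hy⟩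
            exact hg.2.2 (by exact_mod_cast hx') (by exact_mod_cast hy') hxy
    · exact Function.update_self i0 k0 g
  · intro f hf
    simp only [Finset.mem_filter] at hf
    rw [Function.update_idem, ← hf.2, Function.update_eq_self]
  · intro g hg
    rw [mem_sdr] at hg
    funext i
    rcases eq_or_ne i i0 with rfl | hne
    · simp only [Function.update_idem, Function.update_self]
      exact (hg.2.1 i (Finset.notMem_erase i I)).symm
    · simp only [Function.update_of_ne hne]


/-- AM-GM in the form needed: `T^T ≤ |s|^T * ∏ t_k^{t_k}` where `T = ∑ t_k`. -/
lemma amgm (s : Finset (Fin n)) (t : Fin n → ℕ) :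
    ((∑ k ∈ s, t k : ℕ) : ℝ) ^ ((∑ k ∈ s, t k : ℕ) : ℝ)
      ≤ (s.card : ℝ) ^ ((∑ k ∈ s, t k : ℕ) : ℝ) * ∏ k ∈ s, (t k : ℝ) ^ (t k : ℝ) := by
  set T : ℕ := ∑ k ∈ s, t k with hTdef
  by_cases hT : T = 0
  · have h0 : ∀ k ∈ s, t k = 0 := Finset.sum_eq_zero_iff.1 hT.symm.symm
    have h1 : ∏ k ∈ s, (t k : ℝ) ^ (t k : ℝ) = 1 := by
      apply Finset.prod_eq_one
      intro k hk
      rw [h0 k hk]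
      simp
    rw [hT, h1]
    simp
  · have hTpos : 0 < (T : ℝ) := by
      have := Nat.pos_of_ne_zero hT
      exact_mod_cast this
    set s' : Finset (Fin n) := s.filter (fun k => t k ≠ 0) with hs'def
    have hsub : s' ⊆ s := Finset.filter_subset _ _
    have hsum' : ∑ k ∈ s', t k = T := Finset.sum_filter_ne_zero s
    have hne' : s'.Nonempty := by
      rcases Finset.eq_empty_or_nonempty s' with h | h
      · exfalso; apply hT; rw [← hsum', h, Finset.sum_empty]
      · exact h
    have hcard' : 0 < (s'.card : ℝ) := by exact_mod_cast Finset.card_pos.2 hne'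
    have hcard : 0 < (s.card : ℝ) := by
      exact_mod_cast Finset.card_pos.2 (hne'.mono hsub)
    have htpos : ∀ k ∈ s', 0 < (t k : ℝ) := by
      intro k hk
      have := (Finset.mem_filter.1 hk).2
      exact_mod_cast Nat.pos_of_ne_zero this
    -- weighted AM-GM
    have hgm := Real.geom_mean_le_arith_mean_weighted s'
      (fun k => (t k : ℝ) / T) (fun k => ((t k : ℝ))⁻¹)
      (fun k _ => by positivity)
      (by
        rw [← Finset.sum_div, ← Nat.cast_sum, hsum']
        exact div_self (ne_of_gt hTpos))
      (fun k _ => by positivity)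
    have hrhs : ∑ k ∈ s', (t k : ℝ) / T * ((t k : ℝ))⁻¹ = s'.card / T := by
      rw [Finset.sum_congr rfl (fun k hk => show (t k : ℝ)/T * ((t k:ℝ))⁻¹ = 1/T by
        have h1 : (t k : ℝ) ≠ 0 := ne_of_gt (htpos k hk)
        have h2 : (T : ℝ) ≠ 0 := ne_of_gt hTpos
        field_simp), Finset.sum_const, nsmul_eq_mul]
      ring
    set P : ℝ := ∏ k ∈ s', (t k : ℝ) ^ ((t k : ℝ) / T) with hPdef
    have hPpos : 0 < P := Finset.prod_pos (fun k hk => Real.rpow_pos_of_pos (htpos k hk) _)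
    have hlhs : ∏ k ∈ s', ((t k : ℝ))⁻¹ ^ ((t k : ℝ) / T) = P⁻¹ := by
      rw [hPdef, ← Finset.prod_inv_distrib]
      exact Finset.prod_congr rfl (fun k hk => Real.inv_rpow (le_of_lt (htpos k hk)) _)
    rw [hlhs, hrhs] at hgm
    have hP1 : (T : ℝ) / s'.card ≤ P := by
      have h := inv_anti₀ (by positivity) hgm
      rw [inv_inv, inv_div] at h
      exact h
    have hP2 : (T : ℝ) / s.card ≤ P := by
      refine le_trans ?_ hP1
      apply div_le_div_of_nonneg_left (le_of_lt hTpos) hcard'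
      exact_mod_cast Finset.card_le_card hsub
    have hmain : ((T : ℝ) / s.card) ^ (T : ℝ) ≤ P ^ (T : ℝ) :=
      Real.rpow_le_rpow (by positivity) hP2 (le_of_lt hTpos)
    have hPT : P ^ (T : ℝ) = ∏ k ∈ s, (t k : ℝ) ^ (t k : ℝ) := by
      have h1 : P ^ (T : ℝ) = ∏ k ∈ s', ((t k : ℝ) ^ ((t k : ℝ) / T)) ^ (T : ℝ) := by
        rw [hPdef, ← Real.finset_prod_rpow s' _ (fun k _ => by positivity) _]
      have h2 : ∀ k ∈ s', ((t k : ℝ) ^ ((t k : ℝ) / T)) ^ (T : ℝ) = (t k : ℝ) ^ (t k : ℝ) := by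
        intro k hk
        rw [← Real.rpow_mul (le_of_lt (htpos k hk)), div_mul_cancel₀ _ (ne_of_gt hTpos)]
      rw [h1, Finset.prod_congr rfl h2]
      apply Finset.prod_subset hsub
      intro k hks hks'
      have h0 : t k = 0 := by
        by_contra h
        exact hks' (Finset.mem_filter.2 ⟨hks, h⟩)
      rw [h0]
      simp
    calc (T:ℝ) ^ (T:ℝ) = ((T:ℝ)/s.card * s.card) ^ (T:ℝ) := by
          rw [div_mul_cancel₀ _ (ne_of_gt hcard)]
      _ = ((T:ℝ)/s.card) ^ (T:ℝ) * (s.card:ℝ) ^ (T:ℝ) :=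
          Real.mul_rpow (by positivity) (by positivity)
      _ ≤ P ^ (T:ℝ) * (s.card:ℝ) ^ (T:ℝ) :=
          mul_le_mul_of_nonneg_right hmain (by positivity)
      _ = (s.card:ℝ) ^ (T:ℝ) * ∏ k ∈ s, (t k : ℝ) ^ (t k : ℝ) := by
          rw [hPT]; ring


/-- The Brégman-type bound factor for a minor. -/
noncomputable def Phi (K : Finset (Fin n)) (R : Fin n → Finset (Fin n)) (j k : Fin n) : ℝ :=
  ((R j ∩ K.erase k).card.factorial : ℝ) ^ (((R j ∩ K.erase k).card : ℝ))⁻¹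

lemma Phi_nonneg (K : Finset (Fin n)) (R : Fin n → Finset (Fin n)) (j k : Fin n) :
    0 ≤ Phi K R j k := Real.rpow_nonneg (by positivity) _

/-- Evaluation of the product of minor factors over all columns except one. -/
lemma prod_Phi_eval {K : Finset (Fin n)} {R : Fin n → Finset (Fin n)} {j m : Fin n}
    (hm : m ∈ R j ∩ K) :
    ∏ k ∈ K.erase m, Phi K R j k
      = ((((R j ∩ K).card - 1).factorial : ℝ))
        * (((R j ∩ K).card.factorial : ℝ))
            ^ (((K.card : ℝ) - ((R j ∩ K).card : ℝ)) / ((R j ∩ K).card : ℝ)) := by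
  classical
  set r : ℕ := (R j ∩ K).card with hrdef
  have hmR : m ∈ R j := (Finset.mem_inter.1 hm).1
  have hmK : m ∈ K := (Finset.mem_inter.1 hm).2
  have hr1 : 1 ≤ r := Finset.card_pos.2 ⟨m, hm⟩
  have hrK : r ≤ K.card := Finset.card_le_card Finset.inter_subset_right
  -- split into k ∈ R j and k ∉ R j
  rw [← Finset.prod_filter_mul_prod_filter_not (K.erase m) (fun k => k ∈ R j)]
  have hsetA : (K.erase m).filter (fun k => k ∈ R j) = (R j ∩ K).erase m := by
    ext k
    simp only [Finset.mem_filter, Finset.mem_erase, Finset.mem_inter]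
    tauto
  have hA : ∀ k ∈ (K.erase m).filter (fun k => k ∈ R j), Phi K R j k
      = ((r - 1).factorial : ℝ) ^ (((r - 1 : ℕ) : ℝ))⁻¹ := by
    intro k hk
    rw [hsetA] at hk
    have hk' : k ∈ R j ∩ K := Finset.mem_of_mem_erase hk
    have : R j ∩ K.erase k = (R j ∩ K).erase k := by
      ext x
      simp only [Finset.mem_erase, Finset.mem_inter]
      tauto
    unfold Phi
    rw [this, Finset.card_erase_of_mem hk']
  have hB : ∀ k ∈ (K.erase m).filter (fun k => ¬ k ∈ R j), Phi K R j k
      = (r.factorial : ℝ) ^ ((r : ℝ))⁻¹ := by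
    intro k hk
    have hkR : k ∉ R j := (Finset.mem_filter.1 hk).2
    have : R j ∩ K.erase k = R j ∩ K := by
      ext x
      simp only [Finset.mem_erase, Finset.mem_inter]
      constructor
      · tauto
      · intro hx
        exact ⟨hx.1, fun h => hkR (h ▸ hx.1), hx.2⟩
    unfold Phi
    rw [this]
  have hcardA : ((K.erase m).filter (fun k => k ∈ R j)).card = r - 1 := by
    rw [hsetA, Finset.card_erase_of_mem hm]
  have hcardB : ((K.erase m).filter (fun k => ¬ k ∈ R j)).card = K.card - r := by
    have htot := Finset.card_filter_add_card_filter_not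
      (s := K.erase m) (p := fun k => k ∈ R j)
    rw [hcardA, Finset.card_erase_of_mem hmK] at htot
    omega
  rw [Finset.prod_congr rfl hA, Finset.prod_congr rfl hB, Finset.prod_const, Finset.prod_const,
    hcardA, hcardB]
  -- now pure rpow arithmetic
  have e1 : (((r - 1).factorial : ℝ) ^ (((r - 1 : ℕ) : ℝ))⁻¹) ^ (r - 1 : ℕ)
      = ((r - 1).factorial : ℝ) := by
    rcases Nat.lt_or_ge r 2 with h | h
    · have h1 : r = 1 := by omega
      rw [h1]
      norm_num
    · have hne : (((r - 1 : ℕ)) : ℝ) ≠ 0 := by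
        have h1 : 0 < r - 1 := by omega
        exact_mod_cast h1.ne'
      rw [← Real.rpow_natCast (((r - 1).factorial : ℝ) ^ (((r - 1 : ℕ) : ℝ))⁻¹) (r-1),
        ← Real.rpow_mul (by positivity), inv_mul_cancel₀ hne, Real.rpow_one]
  have e2 : ((r.factorial : ℝ) ^ ((r : ℝ))⁻¹) ^ (K.card - r : ℕ)
      = (r.factorial : ℝ) ^ (((K.card : ℝ) - (r : ℝ)) / (r : ℝ)) := by
    rw [← Real.rpow_natCast ((r.factorial : ℝ) ^ ((r : ℝ))⁻¹) (K.card - r),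
      ← Real.rpow_mul (by positivity)]
    congr 1
    rw [Nat.cast_sub hrK]
    field_simp
  rw [e1, e2]


lemma comb {r M p : ℕ} (hr : 1 ≤ r) :
    (r:ℝ) ^ (p:ℝ) * ((((r-1).factorial : ℝ)) * ((r.factorial : ℝ)) ^ (((M:ℝ) - r)/r)) ^ (p:ℕ)
      = ((r.factorial : ℝ) ^ ((r:ℝ))⁻¹) ^ ((M:ℝ) * p) := by
  have hrpos : (0:ℝ) < r := by exact_mod_cast hr
  have hfpos : (0:ℝ) < (r.factorial : ℝ) := by exact_mod_cast Nat.factorial_pos r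
  rw [← Real.rpow_natCast ((((r-1).factorial : ℝ)) * ((r.factorial : ℝ)) ^ (((M:ℝ) - r)/r)) p,
    ← Real.mul_rpow (le_of_lt hrpos) (by positivity)]
  have h1 : (r:ℝ) * (((r-1).factorial:ℝ) * ((r.factorial:ℝ)) ^ (((M:ℝ)-r)/r))
      = (r.factorial:ℝ) ^ ((M:ℝ)/r) := by
    have h2 : (r:ℝ) * ((r-1).factorial:ℝ) = (r.factorial:ℝ) := by
      exact_mod_cast congrArg (Nat.cast (R := ℝ)) (Nat.mul_factorial_pred (by omega))
    rw [← mul_assoc, h2]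
    nth_rewrite 1 [show (r.factorial:ℝ) = (r.factorial:ℝ) ^ (1:ℝ) from (Real.rpow_one _).symm]
    rw [← Real.rpow_add hfpos]
    congr 1
    field_simp
    ring
  rw [h1, ← Real.rpow_mul (le_of_lt hfpos), ← Real.rpow_mul (le_of_lt hfpos)]
  congr 1
  field_simp


/-- **Brégman's theorem** (Schrijver's proof), in SDR-counting form. -/
theorem bregman (N : ℕ) :
    ∀ (I K : Finset (Fin n)) (R : Fin n → Finset (Fin n)), I.card = N → K.card = N →
    ((sdr I K R).card : ℝ)
      ≤ ∏ i ∈ I, ((R i ∩ K).card.factorial : ℝ) ^ (((R i ∩ K).card : ℝ))⁻¹ := by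
  induction N with
  | zero =>
    intro I K R hI hK
    have hIe : I = ∅ := Finset.card_eq_zero.1 hI
    rw [hIe, Finset.prod_empty]
    exact_mod_cast sdr_card_empty K R
  | succ N ih =>
    intro I K R hI hK
    by_cases hp0 : (sdr I K R).card = 0
    · rw [hp0]
      push_cast
      positivity
    · set S := sdr I K R with hS
      set p := S.card with hp
      have hppos : 0 < p := Nat.pos_of_ne_zero hp0
      have hprpos : (0:ℝ) < p := by exact_mod_cast hppos
      have hfmem : ∀ f ∈ S, ∀ i ∈ I, f i ∈ R i ∩ K := fun f hf => (mem_sdr.1 hf).1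
      have hInjOn : ∀ f ∈ S, Set.InjOn f I := fun f hf => (mem_sdr.1 hf).2.2
      set q : Fin n → Fin n → ℕ := fun i k => (S.filter (fun f => f i = k)).card with hq
      have hqsum : ∀ i ∈ I, ∑ k ∈ R i ∩ K, q i k = p := by
        intro i hi
        exact (Finset.card_eq_sum_card_fiberwise (fun f hf => hfmem f hf i hi)).symm
      set B : ℝ := ∏ i ∈ I, ((R i ∩ K).card.factorial : ℝ) ^ (((R i ∩ K).card : ℝ))⁻¹ with hB
      have hBpos : 0 < B :=
        Finset.prod_pos (fun i _ =>
          Real.rpow_pos_of_pos (by exact_mod_cast Nat.factorial_pos _) _)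
      obtain ⟨f0, hf0⟩ := Finset.card_pos.1 hppos
      have hr1 : ∀ i ∈ I, 1 ≤ (R i ∩ K).card := fun i hi =>
        Finset.card_pos.2 ⟨f0 i, hfmem f0 hf0 i hi⟩
      -- Step 1 : AM-GM per row
      have hstep1 : ∀ i ∈ I, (p:ℝ) ^ (p:ℝ)
          ≤ (((R i ∩ K).card : ℝ)) ^ (p:ℝ) * ∏ f ∈ S, (q i (f i) : ℝ) := by
        intro i hi
        have h := amgm (R i ∩ K) (q i)
        rw [hqsum i hi] at h
        refine h.trans (le_of_eq ?_)
        congr 1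
        rw [← Finset.prod_fiberwise_of_maps_to (fun f hf => hfmem f hf i hi)
          (fun f => (q i (f i) : ℝ))]
        refine Finset.prod_congr rfl (fun k hk => ?_)
        have hcongr : ∀ f ∈ S.filter (fun f => f i = k), (q i (f i) : ℝ) = (q i k : ℝ) := by
          intro f hf
          rw [(Finset.mem_filter.1 hf).2]
        have hcardfib : (S.filter (fun f => f i = k)).card = q i k := rfl
        rw [Finset.prod_congr rfl hcongr, Finset.prod_const, hcardfib,
          ← Real.rpow_natCast (q i k : ℝ) (q i k)]
      -- Step 2 : minors and induction hypothesis
      have hminor : ∀ f ∈ S, ∀ i ∈ I, (q i (f i) : ℝ) ≤ ∏ j ∈ I.erase i, Phi K R j (f i) := by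
        intro f hf i hi
        have hk : f i ∈ R i ∩ K := hfmem f hf i hi
        have hcardq : q i (f i) = (sdr (I.erase i) (K.erase (f i)) R).card := fiber_card hi hk
        rw [hcardq]
        have h1 : (I.erase i).card = N := by
          rw [Finset.card_erase_of_mem hi, hI]
          omega
        have h2 : (K.erase (f i)).card = N := by
          rw [Finset.card_erase_of_mem (Finset.mem_inter.1 hk).2, hK]
          omega
        simpa only [Phi] using ih (I.erase i) (K.erase (f i)) R h1 h2
      -- Step 3/4/5 : per-f bound
      have hperf : ∀ f ∈ S, ∏ i ∈ I, (q i (f i) : ℝ)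
          ≤ ∏ j ∈ I, ((((R j ∩ K).card - 1).factorial : ℝ)
              * (((R j ∩ K).card.factorial : ℝ))
                ^ ((((N:ℝ)+1) - ((R j ∩ K).card : ℝ)) / ((R j ∩ K).card : ℝ))) := by
        intro f hf
        have h1 : ∏ i ∈ I, (q i (f i) : ℝ) ≤ ∏ i ∈ I, ∏ j ∈ I.erase i, Phi K R j (f i) :=
          Finset.prod_le_prod (fun i _ => by positivity) (fun i hi => hminor f hf i hi)
        have h2 : ∏ i ∈ I, ∏ j ∈ I.erase i, Phi K R j (f i)
            = ∏ j ∈ I, ∏ i ∈ I.erase j, Phi K R j (f i) := by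
          apply Finset.prod_comm'
          intro x y
          simp only [Finset.mem_erase]
          constructor
          · rintro ⟨hx, hyx, hy⟩
            exact ⟨⟨fun h => hyx h.symm, hx⟩, hy⟩
          · rintro ⟨⟨hxy, hx⟩, hy⟩
            exact ⟨hx, fun h => hxy h.symm, hy⟩
        have h3 : ∀ j ∈ I, ∏ i ∈ I.erase j, Phi K R j (f i)
            = ∏ k ∈ K.erase (f j), Phi K R j k := by
          intro j hj
          have himg : (I.erase j).image f = K.erase (f j) := by
            apply Finset.eq_of_subset_of_card_le
            · intro k hk
              obtain ⟨i, hi, rfl⟩ := Finset.mem_image.1 hk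
              have hiI : i ∈ I := Finset.mem_of_mem_erase hi
              refine Finset.mem_erase.2 ⟨?_, (Finset.mem_inter.1 (hfmem f hf i hiI)).2⟩
              intro h
              exact (Finset.mem_erase.1 hi).1
                (hInjOn f hf (by exact_mod_cast hiI) (by exact_mod_cast hj) h)
            · rw [Finset.card_erase_of_mem ((Finset.mem_inter.1 (hfmem f hf j hj)).2),
                Finset.card_image_of_injOn
                  ((hInjOn f hf).mono (by exact_mod_cast Finset.erase_subset j I)),
                Finset.card_erase_of_mem hj, hI, hK]
          rw [← himg, Finset.prod_image]
          intro x hx y hy hxy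
          exact hInjOn f hf (by exact_mod_cast Finset.mem_of_mem_erase hx)
            (by exact_mod_cast Finset.mem_of_mem_erase hy) hxy
        have h4 : ∀ j ∈ I, ∏ k ∈ K.erase (f j), Phi K R j k
            = (((R j ∩ K).card - 1).factorial : ℝ)
              * (((R j ∩ K).card.factorial : ℝ))
                ^ ((((N:ℝ)+1) - ((R j ∩ K).card : ℝ)) / ((R j ∩ K).card : ℝ)) := by
          intro j hj
          have := prod_Phi_eval (hfmem f hf j hj)
          rw [hK] at this
          push_cast at this ⊢
          exact this
        calc ∏ i ∈ I, (q i (f i) : ℝ)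
            ≤ ∏ i ∈ I, ∏ j ∈ I.erase i, Phi K R j (f i) := h1
          _ = ∏ j ∈ I, ∏ i ∈ I.erase j, Phi K R j (f i) := h2
          _ = ∏ j ∈ I, ∏ k ∈ K.erase (f j), Phi K R j k := Finset.prod_congr rfl h3
          _ = _ := Finset.prod_congr rfl h4
      -- Assembly
      set D : Fin n → ℝ := fun j => (((R j ∩ K).card - 1).factorial : ℝ)
          * (((R j ∩ K).card.factorial : ℝ))
            ^ ((((N:ℝ)+1) - ((R j ∩ K).card : ℝ)) / ((R j ∩ K).card : ℝ)) with hD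
      have hDnonneg : ∀ j, 0 ≤ D j := fun j => by
        rw [hD]
        positivity
      have hkey : (p:ℝ) ^ ((((N:ℝ)+1)) * (p:ℝ)) ≤ B ^ ((((N:ℝ)+1)) * (p:ℝ)) := by
        have lhs_eq : (p:ℝ) ^ ((((N:ℝ)+1)) * (p:ℝ)) = ∏ _i ∈ I, (p:ℝ) ^ (p:ℝ) := by
          rw [Finset.prod_const, hI, ← Real.rpow_natCast ((p:ℝ) ^ (p:ℝ)) (N+1),
            ← Real.rpow_mul (by positivity)]
          congr 1
          push_cast
          ring
        have rhs_eq : B ^ ((((N:ℝ)+1)) * (p:ℝ))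
            = ∏ j ∈ I, (((R j ∩ K).card.factorial : ℝ) ^ (((R j ∩ K).card : ℝ))⁻¹)
                ^ ((((N:ℝ)+1)) * (p:ℝ)) := by
          rw [hB, Real.finset_prod_rpow I _ (fun j _ => by positivity)]
        calc (p:ℝ) ^ ((((N:ℝ)+1)) * (p:ℝ))
            = ∏ _i ∈ I, (p:ℝ) ^ (p:ℝ) := lhs_eq
          _ ≤ ∏ i ∈ I, ((((R i ∩ K).card : ℝ)) ^ (p:ℝ) * ∏ f ∈ S, (q i (f i) : ℝ)) :=
              Finset.prod_le_prod (fun i _ => by positivity) hstep1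
          _ = (∏ i ∈ I, (((R i ∩ K).card : ℝ)) ^ (p:ℝ)) * ∏ i ∈ I, ∏ f ∈ S, (q i (f i) : ℝ) :=
              Finset.prod_mul_distrib
          _ = (∏ i ∈ I, (((R i ∩ K).card : ℝ)) ^ (p:ℝ)) * ∏ f ∈ S, ∏ i ∈ I, (q i (f i) : ℝ) := by
              rw [Finset.prod_comm]
          _ ≤ (∏ i ∈ I, (((R i ∩ K).card : ℝ)) ^ (p:ℝ)) * ∏ _f ∈ S, (∏ j ∈ I, D j) := by
              refine mul_le_mul_of_nonneg_left ?_ (Finset.prod_nonneg (fun i _ => by positivity))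
              exact Finset.prod_le_prod
                (fun f _ => Finset.prod_nonneg (fun i _ => by positivity)) hperf
          _ = (∏ i ∈ I, (((R i ∩ K).card : ℝ)) ^ (p:ℝ)) * ∏ j ∈ I, (D j) ^ (p:ℕ) := by
              rw [Finset.prod_const, ← Finset.prod_pow]
          _ = ∏ j ∈ I, ((((R j ∩ K).card : ℝ)) ^ (p:ℝ) * (D j) ^ (p:ℕ)) :=
              Finset.prod_mul_distrib.symm
          _ = ∏ j ∈ I, (((R j ∩ K).card.factorial : ℝ) ^ (((R j ∩ K).card : ℝ))⁻¹)
                ^ ((((N:ℝ)+1)) * (p:ℝ)) := by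
              refine Finset.prod_congr rfl (fun j hj => ?_)
              have := comb (r := (R j ∩ K).card) (M := N+1) (p := p) (hr1 j hj)
              push_cast at this ⊢
              rw [hD]
              exact this
          _ = B ^ ((((N:ℝ)+1)) * (p:ℝ)) := rhs_eq.symm
      have hexp : (0:ℝ) < (((N:ℝ)+1)) * (p:ℝ) := by positivity
      exact (Real.rpow_le_rpow_iff (by positivity) (le_of_lt hBpos) hexp).1 hkey

end LatinAux

/-- The number of completions of an `(n-3) × n` Latin rectangle to a Latin
square of order `n` is at most `6^{n/3} · 2^{n/2}` (real exponents). -/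
theorem latin_rectangle_three_rows_bound (n : ℕ) (hn : 3 ≤ n)
    (R : Fin (n - 3) → Fin n → Fin n) (hR : IsLatinRectangle (n - 3) n R) :
    (Nat.card {M : Fin n → Fin n → Fin n // IsLatinSquare n M ∧
        ∀ (i : Fin (n - 3)) (j : Fin n), M (Fin.castLE (Nat.sub_le n 3) i) j = R i j} : ℝ) ≤
      (6 : ℝ) ^ ((n : ℝ) / 3) * (2 : ℝ) ^ ((n : ℝ) / 2) := by
  classical
  set a : Fin n := ⟨n-3, by omega⟩ with ha
  set b : Fin n := ⟨n-2, by omega⟩ with hb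
  set Sset : Fin n → Finset (Fin n) :=
    fun j => Finset.univ.filter (fun s => ∀ i, R i j ≠ s) with hSset
  set A : Finset (Fin n → Fin n) := LatinAux.sdr Finset.univ Finset.univ Sset with hA
  set Bf : (Fin n → Fin n) → Finset (Fin n → Fin n) :=
    fun f1 => LatinAux.sdr Finset.univ Finset.univ (fun j => (Sset j).erase (f1 j)) with hBf
  set P := A.sigma Bf with hP
  -- the values of any completion in the bottom rows avoid the rectangle's columns
  have key : ∀ (M : Fin n → Fin n → Fin n), IsLatinSquare n M →
      (∀ i j, M (Fin.castLE (Nat.sub_le n 3) i) j = R i j) →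
      ∀ (r : Fin n), n - 3 ≤ r.val → ∀ j, M r j ∈ Sset j := by
    intro M hM hMR r hr j
    rw [hSset]
    simp only [Finset.mem_filter, Finset.mem_univ, true_and]
    intro i h
    have h2 : M (Fin.castLE (Nat.sub_le n 3) i) j = M r j := by rw [hMR]; exact h
    have h3 := (hM.2 j).injective h2
    have hlt : (Fin.castLE (Nat.sub_le n 3) i).val < n - 3 := i.isLt
    rw [h3] at hlt
    omega
  -- membership of the two new rows in the SDR sets
  have hmem : ∀ M : {M : Fin n → Fin n → Fin n // IsLatinSquare n M ∧
      ∀ (i : Fin (n - 3)) (j : Fin n), M (Fin.castLE (Nat.sub_le n 3) i) j = R i j},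
      (Sigma.mk (fun j => M.1 a j) (fun j => M.1 b j)) ∈ P := by
    rintro ⟨M, hM, hMR⟩
    rw [hP, Finset.mem_sigma]
    constructor
    · rw [hA, LatinAux.mem_sdr]
      refine ⟨fun j _ => Finset.mem_inter.2
        ⟨key M hM hMR a (by simp [ha]) j, Finset.mem_univ _⟩,
        fun j hj => absurd (Finset.mem_univ j) hj, fun x _ y _ h => (hM.1 a).injective h⟩
    · rw [hBf, LatinAux.mem_sdr]
      refine ⟨fun j _ => Finset.mem_inter.2 ⟨?_, Finset.mem_univ _⟩,
        fun j hj => absurd (Finset.mem_univ j) hj, fun x _ y _ h => (hM.1 b).injective h⟩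
      refine Finset.mem_erase.2 ⟨?_, key M hM hMR b (by simp [hb]; omega) j⟩
      intro h
      have hba := (hM.2 j).injective h
      have : (b : Fin n).val = (a : Fin n).val := congrArg Fin.val hba
      rw [ha, hb] at this
      simp at this
      omega
  -- the map to pairs of rows is injective
  have hinj : Function.Injective (fun M : {M : Fin n → Fin n → Fin n // IsLatinSquare n M ∧
      ∀ (i : Fin (n - 3)) (j : Fin n), M (Fin.castLE (Nat.sub_le n 3) i) j = R i j} =>
      (⟨Sigma.mk (fun j => M.1 a j) (fun j => M.1 b j), hmem M⟩ : {x // x ∈ P})) := by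
    rintro ⟨M, hM, hMR⟩ ⟨M', hM', hMR'⟩ hEq
    have hval := congrArg Subtype.val hEq
    dsimp only at hval
    have h1 : (fun j => M a j) = (fun j => M' a j) := congrArg Sigma.fst hval
    have h2 : (fun j => M b j) = (fun j => M' b j) := congrArg Sigma.snd hval
    apply Subtype.ext
    funext i j
    show M i j = M' i j
    have hother : ∀ i : Fin n, i.val ≠ n-1 → M i j = M' i j := by
      intro i hi
      rcases lt_or_ge i.val (n-3) with h | h
      · have e : Fin.castLE (Nat.sub_le n 3) ⟨i.val, h⟩ = i := by
          apply Fin.ext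
          rfl
        rw [← e, hMR, hMR']
      · have hiv : i.val < n := i.isLt
        rcases (by omega : i.val = n-3 ∨ i.val = n-2) with h' | h'
        · have hia : i = a := by apply Fin.ext; rw [ha]; exact h'
          rw [hia]
          exact congrFun h1 j
        · have hib : i = b := by apply Fin.ext; rw [hb]; exact h'
          rw [hib]
          exact congrFun h2 j
    rcases eq_or_ne i.val (n-1) with h | h
    · obtain ⟨i', hi'⟩ := (hM'.2 j).surjective (M i j)
      rcases eq_or_ne i'.val (n-1) with h' | h'
      · have : i' = i := by apply Fin.ext; omega
        rw [← hi', this]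
      · have hMi : M i' j = M i j := by rw [hother i' h']; exact hi'
        have : i' = i := (hM.2 j).injective hMi
        exact absurd (this ▸ h) h'
    · exact hother i h
  -- cardinality of the symbol sets
  have h3 : ∀ j : Fin n, (Sset j).card = 3 := by
    intro j
    have himg : (Finset.univ.image (fun i => R i j)).card = n - 3 := by
      rw [Finset.card_image_of_injective _ (hR.2 j), Finset.card_univ, Fintype.card_fin]
    have hs : Sset j = Finset.univ \ Finset.univ.image (fun i => R i j) := by
      ext s
      rw [hSset]
      simp only [Finset.mem_filter, Finset.mem_univ, true_and, Finset.mem_sdiff,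
        Finset.mem_image, not_exists]
    rw [hs, Finset.card_sdiff_of_subset (Finset.subset_univ _), Finset.card_univ, Fintype.card_fin, himg]
    omega
  -- Brégman bound for the first new row
  have hAbound : ((A.card : ℕ) : ℝ) ≤ (6:ℝ) ^ ((n:ℝ)/3) := by
    have hb := LatinAux.bregman (n := n) n Finset.univ Finset.univ Sset
      (by simp) (by simp)
    rw [← hA] at hb
    refine hb.trans (le_of_eq ?_)
    have : ∀ j ∈ (Finset.univ : Finset (Fin n)),
        ((Sset j ∩ Finset.univ).card.factorial : ℝ) ^ (((Sset j ∩ Finset.univ).card : ℝ))⁻¹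
          = (6:ℝ) ^ (((3:ℕ):ℝ))⁻¹ := by
      intro j _
      rw [Finset.inter_univ, h3 j]
      norm_num [Nat.factorial]
    rw [Finset.prod_congr rfl this, Finset.prod_const, Finset.card_univ, Fintype.card_fin,
      ← Real.rpow_natCast ((6:ℝ) ^ (((3:ℕ):ℝ))⁻¹) n, ← Real.rpow_mul (by norm_num)]
    congr 1
    push_cast
    ring
  -- Brégman bound for the second new row
  have hBfbound : ∀ f1 ∈ A, (((Bf f1).card : ℕ) : ℝ) ≤ (2:ℝ) ^ ((n:ℝ)/2) := by
    intro f1 hf1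
    have hf1m : ∀ j, f1 j ∈ Sset j := by
      intro j
      rw [hA, LatinAux.mem_sdr] at hf1
      exact (Finset.mem_inter.1 (hf1.1 j (Finset.mem_univ j))).1
    have hb := LatinAux.bregman (n := n) n Finset.univ Finset.univ
      (fun j => (Sset j).erase (f1 j)) (by simp) (by simp)
    rw [show LatinAux.sdr Finset.univ Finset.univ (fun j => (Sset j).erase (f1 j)) = Bf f1
      from by rw [hBf]] at hb
    refine hb.trans (le_of_eq ?_)
    have : ∀ j ∈ (Finset.univ : Finset (Fin n)),
        ((((Sset j).erase (f1 j) ∩ Finset.univ).card.factorial : ℝ)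
            ^ ((((Sset j).erase (f1 j) ∩ Finset.univ).card : ℝ))⁻¹)
          = (2:ℝ) ^ (((2:ℕ):ℝ))⁻¹ := by
      intro j _
      rw [Finset.inter_univ, Finset.card_erase_of_mem (hf1m j), h3 j]
      norm_num [Nat.factorial]
    rw [Finset.prod_congr rfl this, Finset.prod_const, Finset.card_univ, Fintype.card_fin,
      ← Real.rpow_natCast ((2:ℝ) ^ (((2:ℕ):ℝ))⁻¹) n, ← Real.rpow_mul (by norm_num)]
    congr 1
    push_cast
    ring
  -- put everything together
  have hNat : Nat.card {M : Fin n → Fin n → Fin n // IsLatinSquare n M ∧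
      ∀ (i : Fin (n - 3)) (j : Fin n), M (Fin.castLE (Nat.sub_le n 3) i) j = R i j}
        ≤ P.card := by
    calc Nat.card {M : Fin n → Fin n → Fin n // IsLatinSquare n M ∧
        ∀ (i : Fin (n - 3)) (j : Fin n), M (Fin.castLE (Nat.sub_le n 3) i) j = R i j}
        ≤ Nat.card {x // x ∈ P} := Nat.card_le_card_of_injective _ hinj
      _ = P.card := Nat.card_eq_finsetCard P
  calc (Nat.card {M : Fin n → Fin n → Fin n // IsLatinSquare n M ∧
        ∀ (i : Fin (n - 3)) (j : Fin n), M (Fin.castLE (Nat.sub_le n 3) i) j = R i j} : ℝ)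
      ≤ (P.card : ℝ) := by exact_mod_cast hNat
    _ = ∑ f1 ∈ A, (((Bf f1).card : ℕ) : ℝ) := by
        rw [hP, Finset.card_sigma]
        push_cast
        rfl
    _ ≤ ∑ _f1 ∈ A, (2:ℝ) ^ ((n:ℝ)/2) := Finset.sum_le_sum hBfbound
    _ = ((A.card : ℕ) : ℝ) * (2:ℝ) ^ ((n:ℝ)/2) := by
        rw [Finset.sum_const, nsmul_eq_mul]
    _ ≤ (6:ℝ) ^ ((n:ℝ)/3) * (2:ℝ) ^ ((n:ℝ)/2) :=
        mul_le_mul_of_nonneg_right hAbound (by positivity)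
end

section
/- Let R be a 7 × 9 matrix with entries in {1,…,9} whose rows are permutations of {1,…,9}, whose columns have pairwise distinct entries, and such that for each of the six 3 × 3 blocks contained in the first six rows (rows 1–3 and rows 4–6, paired with columns 1–3, 4–6, 7–9) the nine entries of the block are a permutation of {1,…,9}, and for each of the three blocks of rows 7–9 the three entries of row 7 in that block's columns (columns 1–3, 4–6, 7–9 respectively) are pairwise distinct. Then the number of Sudoku matrices whose first seven rows agree with R is at most 16. -/
/-- The cell in row-block/column position: `cell a b` is the index `3a + b` of `Fin 9`. -/
def cell (a b : Fin 3) : Fin 9 :=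
  ⟨3 * a.val + b.val, by have := a.isLt; have := b.isLt; omega⟩

/-- A Sudoku matrix: a `9 × 9` matrix (values in `Fin 9`, representing `{1,…,9}`)
in which every row, every column, and each of the nine `3 × 3` sub-blocks is a
permutation of the nine symbols. -/
def IsSudoku (M : Fin 9 → Fin 9 → Fin 9) : Prop :=
  (∀ i, Function.Bijective (M i)) ∧ (∀ j, Function.Bijective fun i => M i j) ∧
  (∀ br bc : Fin 3,
    Function.Bijective fun p : Fin 3 × Fin 3 => M (cell br p.1) (cell bc p.2))

lemma two_elt {α : Type*} [DecidableEq α] {T : Finset α} (hT : T.card = 2) {x y z : α}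
    (hx : x ∈ T) (hy : y ∈ T) (hz : z ∈ T) (hxz : x ≠ z) (hyz : y ≠ z) : x = y := by
  obtain ⟨a, b, hab, hTab⟩ := Finset.card_eq_two.mp hT
  rw [hTab] at hx hy hz
  simp only [Finset.mem_insert, Finset.mem_singleton] at hx hy hz
  rcases hx with rfl | rfl <;> rcases hy with rfl | rfl <;> rcases hz with rfl | rfl <;> tauto

lemma key (S : Fin 9 → Finset (Fin 9))
    (hS : ∀ j, (S j).card = 2)
    (hsym : ∀ s : Fin 9, (Finset.univ.filter fun j => s ∈ S j).card = 2) :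
    Nat.card {f : Fin 9 → Fin 9 // Function.Bijective f ∧ ∀ j, f j ∈ S j} ≤ 16 := by
  classical
  set G : SimpleGraph (Fin 9) :=
    { Adj := fun j k => j ≠ k ∧ ((S j) ∩ (S k)).Nonempty
      symm := ⟨by
        rintro j k ⟨h1, h2⟩
        exact ⟨h1.symm, by rwa [Finset.inter_comm]⟩⟩
      loopless := ⟨fun j h => h.1 rfl⟩ } with hG
  have hSne : ∀ j, (S j).Nonempty := fun j => by
    rw [← Finset.card_pos, hS j]; norm_num
  have hnbr : ∀ j, ∃ k, G.Adj j k := by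
    intro j
    obtain ⟨s, hs⟩ := hSne j
    have h2 : 1 < (Finset.univ.filter fun m => s ∈ S m).card := by rw [hsym]; norm_num
    obtain ⟨k, hk, hkj⟩ := Finset.exists_mem_ne h2 j
    exact ⟨k, hkj.symm, s, Finset.mem_inter.mpr ⟨hs, (Finset.mem_filter.mp hk).2⟩⟩
  have hfilter_eq : ∀ (s j k : Fin 9), j ≠ k → s ∈ S j → s ∈ S k →
      (Finset.univ.filter fun m => s ∈ S m) = {j, k} := by
    intro s j k hjk hsj hsk
    refine (Finset.eq_of_subset_of_card_le ?_ ?_).symm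
    · intro m hm
      rcases Finset.mem_insert.mp hm with rfl | hm'
      · exact Finset.mem_filter.mpr ⟨Finset.mem_univ _, hsj⟩
      · rw [Finset.mem_singleton] at hm'
        subst hm'
        exact Finset.mem_filter.mpr ⟨Finset.mem_univ _, hsk⟩
    · rw [hsym, Finset.card_pair hjk]
  -- adjacency propagation
  have hadj : ∀ (f g : Fin 9 → Fin 9), Function.Bijective f → (∀ j, f j ∈ S j) →
      Function.Bijective g → (∀ j, g j ∈ S j) →
      ∀ j k, G.Adj j k → f j = g j → f k = g k := by
    rintro f g hf hfS hg hgS j k ⟨hjk, s, hs⟩ hfg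
    obtain ⟨hsj, hsk⟩ := Finset.mem_inter.mp hs
    by_cases hfs : f j = s
    · have hgs : g j = s := hfg ▸ hfs
      have h1 : f k ≠ s := by
        intro h
        exact hjk (hf.injective (by rw [hfs, h]))
      have h2 : g k ≠ s := by
        intro h
        exact hjk (hg.injective (by rw [hgs, h]))
      exact two_elt (hS k) (hfS k) (hgS k) hsk h1 h2
    · obtain ⟨m, hm⟩ := hf.surjective s
      have hmS : s ∈ S m := hm ▸ hfS m
      have hmem : m ∈ ({j, k} : Finset (Fin 9)) := by
        rw [← hfilter_eq s j k hjk hsj hsk]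
        exact Finset.mem_filter.mpr ⟨Finset.mem_univ _, hmS⟩
      have hfk : f k = s := by
        rcases Finset.mem_insert.mp hmem with rfl | hm'
        · exact absurd hm hfs
        · rw [Finset.mem_singleton] at hm'; subst hm'; exact hm
      obtain ⟨m', hm'⟩ := hg.surjective s
      have hm'S : s ∈ S m' := hm' ▸ hgS m'
      have hmem' : m' ∈ ({j, k} : Finset (Fin 9)) := by
        rw [← hfilter_eq s j k hjk hsj hsk]
        exact Finset.mem_filter.mpr ⟨Finset.mem_univ _, hm'S⟩
      have hgk : g k = s := by
        rcases Finset.mem_insert.mp hmem' with rfl | hmm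
        · exact absurd hm' (hfg ▸ hfs)
        · rw [Finset.mem_singleton] at hmm; subst hmm; exact hm'
      rw [hfk, hgk]
  have hreach : ∀ (f g : Fin 9 → Fin 9), Function.Bijective f → (∀ j, f j ∈ S j) →
      Function.Bijective g → (∀ j, g j ∈ S j) →
      ∀ j k, G.Reachable j k → f j = g j → f k = g k := by
    rintro f g hf hfS hg hgS j k ⟨w⟩
    induction w with
    | nil => exact id
    | cons h p ih => exact fun hj => ih (hadj f g hf hfS hg hgS _ _ h hj)
  have : Finite G.ConnectedComponent :=
    Finite.of_surjective G.connectedComponentMk (fun c => c.exists_rep)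
  have fC : Fintype G.ConnectedComponent := Fintype.ofFinite _
  have hcard : Fintype.card G.ConnectedComponent ≤ 4 := by
    have h9 : (Finset.univ : Finset (Fin 9)).card =
        ∑ c : G.ConnectedComponent,
          (Finset.univ.filter fun j => G.connectedComponentMk j = c).card :=
      Finset.card_eq_sum_card_fiberwise (fun j _ => Finset.mem_univ _)
    have hge : ∀ c : G.ConnectedComponent,
        2 ≤ (Finset.univ.filter fun j => G.connectedComponentMk j = c).card := by
      intro c
      obtain ⟨j, rfl⟩ := c.exists_rep
      obtain ⟨k, hk⟩ := hnbr j
      have hmk : G.connectedComponentMk k = G.connectedComponentMk j :=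
        SimpleGraph.ConnectedComponent.sound hk.symm.reachable
      calc 2 = ({j, k} : Finset (Fin 9)).card := (Finset.card_pair hk.1).symm
        _ ≤ _ := by
          apply Finset.card_le_card
          intro m hm
          rcases Finset.mem_insert.mp hm with rfl | hm'
          · exact Finset.mem_filter.mpr ⟨Finset.mem_univ _, rfl⟩
          · rw [Finset.mem_singleton] at hm'; subst hm'
            exact Finset.mem_filter.mpr ⟨Finset.mem_univ _, hmk⟩
    have h2 : 2 * Fintype.card G.ConnectedComponent ≤ 9 := by
      calc 2 * Fintype.card G.ConnectedComponent
          = ∑ _c : G.ConnectedComponent, 2 := by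
            rw [Finset.sum_const, Finset.card_univ]; ring
        _ ≤ ∑ c : G.ConnectedComponent,
            (Finset.univ.filter fun j => G.connectedComponentMk j = c).card :=
            Finset.sum_le_sum (fun c _ => hge c)
        _ = 9 := by rw [← h9]; simp
    omega
  -- the injection
  let a : Fin 9 → Fin 9 := fun j => (S j).min' (hSne j)
  have haS : ∀ j, a j ∈ S j := fun j => (S j).min'_mem _
  let Φ : {f : Fin 9 → Fin 9 // Function.Bijective f ∧ ∀ j, f j ∈ S j} →
      (G.ConnectedComponent → Bool) :=
    fun f c => decide (f.1 c.out = a c.out)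
  have hΦ : Function.Injective Φ := by
    rintro ⟨f, hf, hfS⟩ ⟨g, hg, hgS⟩ h
    have hout : ∀ c : G.ConnectedComponent, f c.out = g c.out := by
      intro c
      have := congrFun h c
      simp only [Φ, decide_eq_decide] at this
      by_cases hfa : f c.out = a c.out
      · rw [hfa, (this.mp hfa)]
      · have hga : g c.out ≠ a c.out := fun hh => hfa (this.mpr hh)
        exact two_elt (hS c.out) (hfS c.out) (hgS c.out) (haS c.out) hfa hga
    apply Subtype.ext
    funext j
    have hr : G.Reachable (G.connectedComponentMk j).out j :=
      SimpleGraph.ConnectedComponent.exact ((G.connectedComponentMk j).out_eq)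
    exact hreach f g hf hfS hg hgS _ j hr (hout _)
  calc Nat.card {f : Fin 9 → Fin 9 // Function.Bijective f ∧ ∀ j, f j ∈ S j}
      ≤ Nat.card (G.ConnectedComponent → Bool) := Nat.card_le_card_of_injective Φ hΦ
    _ = 2 ^ Fintype.card G.ConnectedComponent := by
        simp [Nat.card_eq_fintype_card]
    _ ≤ 2 ^ 4 := Nat.pow_le_pow_right (by norm_num) hcard
    _ = 16 := rfl

/-- Given an admissible choice of the first seven rows of a Sudoku matrix (rows
and partial columns/blocks obeying the Sudoku conditions), there are at most 16
Sudoku matrices whose first seven rows agree with it. -/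
theorem sudoku_seven_rows_at_most_sixteen_completions
    (R : Fin 7 → Fin 9 → Fin 9)
    (hrow : ∀ i, Function.Bijective (R i))
    (hcol : ∀ j, Function.Injective fun i : Fin 7 => R i j)
    (hblock : ∀ (br : Fin 2) (bc : Fin 3),
      Function.Bijective fun p : Fin 3 × Fin 3 =>
        R ⟨3 * br.val + p.1.val, by have := br.isLt; have := p.1.isLt; omega⟩
          (cell bc p.2))
    (hlast : ∀ bc : Fin 3,
      Function.Injective fun j : Fin 3 => R ⟨6, by omega⟩ (cell bc j)) :
    Nat.card {M : Fin 9 → Fin 9 → Fin 9 // IsSudoku M ∧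
      ∀ (i : Fin 7) (j : Fin 9),
        M (Fin.castLE (by norm_num : (7:ℕ) ≤ 9) i) j = R i j} ≤ 16 := by
  classical
  set S : Fin 9 → Finset (Fin 9) :=
    fun j => Finset.univ \ (Finset.univ.image fun i : Fin 7 => R i j) with hSdef
  have himg : ∀ j, (Finset.univ.image fun i : Fin 7 => R i j).card = 7 := by
    intro j
    rw [Finset.card_image_of_injective _ (hcol j), Finset.card_univ, Fintype.card_fin]
  have hS : ∀ j, (S j).card = 2 := by
    intro j
    rw [hSdef]
    rw [Finset.card_sdiff_of_subset (Finset.subset_univ _), himg j, Finset.card_univ, Fintype.card_fin]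
  have hmemS : ∀ j s, s ∈ S j ↔ ∀ i : Fin 7, R i j ≠ s := by
    intro j s
    rw [hSdef]
    simp
  have hsym : ∀ s : Fin 9, (Finset.univ.filter fun j => s ∈ S j).card = 2 := by
    intro s
    -- the columns containing s form the image of an injective map Fin 7 → Fin 9
    have hg : ∀ i : Fin 7, ∃ j, R i j = s := fun i => (hrow i).surjective s
    choose g hgspec using hg
    have hginj : Function.Injective g := by
      intro i i' h
      apply hcol (g i)
      simp only
      rw [hgspec i, h, hgspec i']
    have hA : (Finset.univ.filter fun j => s ∉ S j) = Finset.univ.image g := by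
      ext j
      simp only [Finset.mem_filter, Finset.mem_univ, true_and, Finset.mem_image,
        hmemS, not_forall, not_not]
      constructor
      · rintro ⟨i, hi⟩
        exact ⟨i, ((hrow i).injective (by rw [hgspec i, hi])).symm⟩
      · rintro ⟨i, rfl⟩
        exact ⟨i, hgspec i⟩
    have hAcard : (Finset.univ.filter fun j => s ∉ S j).card = 7 := by
      rw [hA, Finset.card_image_of_injective _ hginj, Finset.card_univ, Fintype.card_fin]
    have := Finset.card_filter_add_card_filter_not
      (s := (Finset.univ : Finset (Fin 9))) (p := fun j => s ∈ S j)
    rw [Finset.card_univ, Fintype.card_fin] at this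
    omega
  -- the injection from completions to SDRs
  have h79 : (7:ℕ) ≤ 9 := by norm_num
  let i7 : Fin 9 := ⟨7, by norm_num⟩
  let i8 : Fin 9 := ⟨8, by norm_num⟩
  let Ψ : {M : Fin 9 → Fin 9 → Fin 9 // IsSudoku M ∧
        ∀ (i : Fin 7) (j : Fin 9), M (Fin.castLE h79 i) j = R i j} →
      {f : Fin 9 → Fin 9 // Function.Bijective f ∧ ∀ j, f j ∈ S j} := by
    refine fun M => ⟨M.1 i7, M.2.1.1 i7, ?_⟩
    intro j
    rw [hmemS]
    intro i hh
    have hcolinj : Function.Injective fun i' : Fin 9 => M.1 i' j := (M.2.1.2.1 j).injective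
    have heq : Fin.castLE h79 i = i7 := hcolinj (by
      simp only
      rw [M.2.2 i j, hh])
    have hv : (i.val : ℕ) = 7 := by simpa [i7] using congrArg Fin.val heq
    have := i.isLt
    omega
  have hΨ : Function.Injective Ψ := by
    rintro ⟨M, hM, hMR⟩ ⟨N, hN, hNR⟩ h
    have h7 : M i7 = N i7 := congrArg Subtype.val h
    apply Subtype.ext
    show M = N
    funext i j
    rcases lt_trichotomy i.val 7 with hi | hi | hi
    · have : i = Fin.castLE h79 ⟨i.val, hi⟩ := by
        apply Fin.ext; rfl
      rw [this, hMR, hNR]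
    · have : i = i7 := Fin.ext hi
      rw [this, h7]
    · have hi8 : i = i8 := by
        apply Fin.ext
        have := i.isLt
        simp only [i8]
        omega
      subst hi8
      have hMmem : ∀ i' : Fin 9, M i' j ∈ S j ∨ i'.val < 7 := by
        intro i'
        by_cases hlt : i'.val < 7
        · exact Or.inr hlt
        · left
          rw [hmemS]
          intro i'' hh
          have hcolinj : Function.Injective fun x : Fin 9 => M x j := (hM.2.1 j).injective
          have heq : Fin.castLE h79 i'' = i' := hcolinj (by
            simp only
            rw [hMR i'' j, hh])
          have hv : (i''.val : ℕ) = i'.val := by simpa using congrArg Fin.val heq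
          have := i''.isLt
          omega
      have hNmem : ∀ i' : Fin 9, N i' j ∈ S j ∨ i'.val < 7 := by
        intro i'
        by_cases hlt : i'.val < 7
        · exact Or.inr hlt
        · left
          rw [hmemS]
          intro i'' hh
          have hcolinj : Function.Injective fun x : Fin 9 => N x j := (hN.2.1 j).injective
          have heq : Fin.castLE h79 i'' = i' := hcolinj (by
            simp only
            rw [hNR i'' j, hh])
          have hv : (i''.val : ℕ) = i'.val := by simpa using congrArg Fin.val heq
          have := i''.isLt
          omega
      have hM8 : M i8 j ∈ S j := by
        rcases hMmem i8 with h | h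
        · exact h
        · simp [i8] at h
      have hN8 : N i8 j ∈ S j := by
        rcases hNmem i8 with h | h
        · exact h
        · simp [i8] at h
      have hM7 : M i7 j ∈ S j := by
        rcases hMmem i7 with h | h
        · exact h
        · simp [i7] at h
      have hM87 : M i8 j ≠ M i7 j := by
        intro hh
        have hcolinj : Function.Injective fun x : Fin 9 => M x j := (hM.2.1 j).injective
        have := congrArg Fin.val (hcolinj hh)
        simp [i7, i8] at this
      have hN87 : N i8 j ≠ M i7 j := by
        rw [h7]
        intro hh
        have hcolinj : Function.Injective fun x : Fin 9 => N x j := (hN.2.1 j).injective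
        have := congrArg Fin.val (hcolinj hh)
        simp [i7, i8] at this
      exact two_elt (hS j) hM8 hN8 hM7 hM87 hN87
  calc Nat.card {M : Fin 9 → Fin 9 → Fin 9 // IsSudoku M ∧
        ∀ (i : Fin 7) (j : Fin 9), M (Fin.castLE (by norm_num : (7:ℕ) ≤ 9) i) j = R i j}
      ≤ Nat.card {f : Fin 9 → Fin 9 // Function.Bijective f ∧ ∀ j, f j ∈ S j} :=
        Nat.card_le_card_of_injective Ψ hΨ
    _ ≤ 16 := key S hS hsym
end

section
/- For every n ≥ 1, the number |LS_n| of Latin squares of order n satisfies the upper bound |LS_n| ≤ ∏_{k=1}^{n} (k!)^{n/k}, where the exponents n/k are real numbers and the inequality is between real numbers. -/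
open Finset Function Nat

namespace BregmanAux


lemma prod_range_fact (t : ℕ) : ∏ v ∈ Finset.range t, (t - v) = t ! := by
  rw [← Finset.prod_range_reflect, ← Finset.prod_range_add_one_eq_factorial]
  apply Finset.prod_congr rfl
  intro j hj
  rw [Finset.mem_range] at hj
  omega

lemma key_ineq {β : Type*} (F : Finset β) (a : β → ℕ) :
    (∑ j ∈ F, a j) ^ (∑ j ∈ F, a j) ≤ F.card ^ (∑ j ∈ F, a j) * ∏ j ∈ F, a j ^ a j := by
  classical
  rcases Nat.eq_zero_or_pos (∑ j ∈ F, a j) with h0 | hpos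
  · have hz : ∀ j ∈ F, a j = 0 := fun j hj => Finset.sum_eq_zero_iff.mp h0 j hj
    have h1 : ∏ j ∈ F, a j ^ a j = 1 :=
      Finset.prod_eq_one fun j hj => by rw [hz j hj]; rfl
    rw [h0]; simp [h1]
  set L := ∑ j ∈ F, a j with hLdef
  set s := F.filter fun j => a j ≠ 0 with hsdef
  have hsub : s ⊆ F := Finset.filter_subset _ _
  have hane : ∀ j ∈ s, a j ≠ 0 := fun j hj => (Finset.mem_filter.mp hj).2
  have hsum : ∑ j ∈ s, a j = L := Finset.sum_filter_ne_zero F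
  have hLne : (L : ℝ) ≠ 0 := Nat.cast_ne_zero.mpr hpos.ne'
  -- AM-GM
  have hgm : ∏ j ∈ s, ((L : ℝ) / (a j)) ^ ((a j : ℝ) / L) ≤ (F.card : ℝ) := by
    calc ∏ j ∈ s, ((L : ℝ) / (a j)) ^ ((a j : ℝ) / L)
        ≤ ∑ j ∈ s, ((a j : ℝ) / L) * ((L : ℝ) / (a j)) := by
          apply Real.geom_mean_le_arith_mean_weighted s _ _
            (fun j hj => by positivity)
            ?_ (fun j hj => by positivity)
          rw [← Finset.sum_div]
          rw [div_eq_one_iff_eq hLne]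
          exact_mod_cast hsum
      _ = (s.card : ℝ) := by
          rw [Finset.sum_congr rfl fun j hj => ?_, Finset.sum_const, nsmul_eq_mul, mul_one]
          have haj : (a j : ℝ) ≠ 0 := Nat.cast_ne_zero.mpr (hane j hj)
          field_simp
      _ ≤ (F.card : ℝ) := by exact_mod_cast Finset.card_le_card hsub
  -- raise to the L-th power
  have h2 : ∏ j ∈ s, ((L : ℝ) / (a j)) ^ (a j) ≤ (F.card : ℝ) ^ L := by
    have hnn : (0:ℝ) ≤ ∏ j ∈ s, ((L : ℝ) / (a j)) ^ ((a j : ℝ) / L) :=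
      Finset.prod_nonneg fun j hj => Real.rpow_nonneg (by positivity) _
    have := pow_le_pow_left₀ hnn hgm L
    rw [← Finset.prod_pow] at this
    calc ∏ j ∈ s, ((L : ℝ) / (a j)) ^ (a j)
        = ∏ j ∈ s, (((L : ℝ) / (a j)) ^ ((a j : ℝ) / L)) ^ L := by
          apply Finset.prod_congr rfl
          intro j hj
          rw [← Real.rpow_natCast (((L : ℝ) / (a j)) ^ ((a j : ℝ) / L)) L,
            ← Real.rpow_mul (by positivity), div_mul_cancel₀ _ hLne, Real.rpow_natCast]
      _ ≤ (F.card : ℝ) ^ L := this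
  have h3 : ((L : ℝ)) ^ L = (∏ j ∈ s, ((L : ℝ) / (a j)) ^ (a j)) * ∏ j ∈ s, (a j : ℝ) ^ (a j) := by
    rw [← Finset.prod_mul_distrib]
    have : ∀ j ∈ s, ((L : ℝ) / (a j)) ^ (a j) * (a j : ℝ) ^ (a j) = (L : ℝ) ^ (a j) := by
      intro j hj
      rw [← mul_pow, div_mul_cancel₀ _ (Nat.cast_ne_zero.mpr (hane j hj))]
    rw [Finset.prod_congr rfl this, Finset.prod_pow_eq_pow_sum, hsum]
  have h4 : ∏ j ∈ s, (a j : ℝ) ^ (a j) = ∏ j ∈ F, (a j : ℝ) ^ (a j) := by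
    apply Finset.prod_subset hsub
    intro j hjF hjs
    have : a j = 0 := by
      by_contra h
      exact hjs (Finset.mem_filter.mpr ⟨hjF, h⟩)
    rw [this]; norm_num
  have h5 : ((L : ℝ)) ^ L ≤ (F.card : ℝ) ^ L * ∏ j ∈ F, (a j : ℝ) ^ (a j) := by
    rw [h3, h4]
    apply mul_le_mul_of_nonneg_right h2
    exact Finset.prod_nonneg fun j hj => by positivity
  exact_mod_cast h5

variable {n : ℕ}

def pmatch (s : Finset (Fin n)) (A : Fin n → Finset (Fin n)) : Finset (Fin n → Fin n) :=
  univ.filter fun σ =>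
    (∀ a ∈ s, ∀ b ∈ s, σ a = σ b → a = b) ∧ (∀ i ∈ s, σ i ∈ A i) ∧ ∀ i ∉ s, σ i = i

def availS (s : Finset (Fin n)) (A : Fin n → Finset (Fin n)) (σ : Fin n → Fin n) (i : Fin n) :
    ℕ :=
  ((A i).filter fun j => ∀ i' ∈ s, i' < i → σ i' ≠ j).card

lemma mem_pmatch {s : Finset (Fin n)} {A : Fin n → Finset (Fin n)} {σ : Fin n → Fin n} :
    σ ∈ pmatch s A ↔
      (∀ a ∈ s, ∀ b ∈ s, σ a = σ b → a = b) ∧ (∀ i ∈ s, σ i ∈ A i) ∧ ∀ i ∉ s, σ i = i := by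
  simp [pmatch]


lemma lemma1 (s : Finset (Fin n)) : ∀ A : Fin n → Finset (Fin n),
    (pmatch s A).card ^ (pmatch s A).card ≤ ∏ σ ∈ pmatch s A, ∏ i ∈ s, availS s A σ i := by
  induction s using Finset.strongInduction with
  | _ s ih =>
  intro A
  rcases s.eq_empty_or_nonempty with rfl | hne
  · have h1 : pmatch (∅ : Finset (Fin n)) A = {fun i => i} := by
      ext σ
      simp [mem_pmatch, funext_iff]
    rw [h1]
    simp
  set m := s.min' hne with hmdef
  have hm : m ∈ s := s.min'_mem hne
  set s' := s.erase m with hs'def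
  have hss : s' ⊂ s := Finset.erase_ssubset hm
  have hmins : ∀ i ∈ s, m ≤ i := fun i hi => s.min'_le i hi
  have hmlt : ∀ i ∈ s', m < i := fun i hi =>
    lt_of_le_of_ne (hmins i (Finset.mem_of_mem_erase hi))
      (Ne.symm (Finset.ne_of_mem_erase hi))
  set A' : Fin n → Fin n → Finset (Fin n) := fun j i => (A i).erase j with hA'def
  -- membership of the forward map
  have hφmem : ∀ j, ∀ σ ∈ (pmatch s A).filter (fun σ => σ m = j),
      Function.update σ m m ∈ pmatch s' (A' j) := by
    intro j σ hσ
    obtain ⟨hσP, hσm⟩ := Finset.mem_filter.mp hσ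
    obtain ⟨hinj, hA, hout⟩ := mem_pmatch.mp hσP
    refine mem_pmatch.mpr ⟨?_, ?_, ?_⟩
    · intro a ha b hb hab
      rw [Function.update_of_ne (Finset.ne_of_mem_erase ha),
        Function.update_of_ne (Finset.ne_of_mem_erase hb)] at hab
      exact hinj a (Finset.mem_of_mem_erase ha) b (Finset.mem_of_mem_erase hb) hab
    · intro i hi
      rw [Function.update_of_ne (Finset.ne_of_mem_erase hi)]
      refine Finset.mem_erase.mpr ⟨?_, hA i (Finset.mem_of_mem_erase hi)⟩
      intro hij
      rw [← hσm] at hij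
      exact Finset.ne_of_mem_erase hi
        (hinj i (Finset.mem_of_mem_erase hi) m hm hij)
    · intro i hi
      by_cases him : i = m
      · subst him; simp
      · rw [Function.update_of_ne him]
        exact hout i fun hiS => hi (Finset.mem_erase.mpr ⟨him, hiS⟩)
  have hψmem : ∀ j ∈ A m, ∀ σ' ∈ pmatch s' (A' j),
      Function.update σ' m j ∈ (pmatch s A).filter (fun σ => σ m = j) := by
    intro j hj σ' hσ'
    obtain ⟨hinj, hA, hout⟩ := mem_pmatch.mp hσ'
    have hne' : ∀ i ∈ s', σ' i ≠ j := fun i hi =>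
      Finset.ne_of_mem_erase (hA i hi)
    refine Finset.mem_filter.mpr ⟨mem_pmatch.mpr ⟨?_, ?_, ?_⟩, by simp⟩
    · intro a ha b hb hab
      by_cases ham : a = m <;> by_cases hbm : b = m
      · rw [ham, hbm]
      · subst ham
        rw [Function.update_self, Function.update_of_ne hbm] at hab
        exact absurd hab.symm (hne' b (Finset.mem_erase.mpr ⟨hbm, hb⟩))
      · subst hbm
        rw [Function.update_self, Function.update_of_ne ham] at hab
        exact absurd hab (hne' a (Finset.mem_erase.mpr ⟨ham, ha⟩))
      · rw [Function.update_of_ne ham, Function.update_of_ne hbm] at hab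
        exact hinj a (Finset.mem_erase.mpr ⟨ham, ha⟩) b (Finset.mem_erase.mpr ⟨hbm, hb⟩) hab
    · intro i hi
      by_cases him : i = m
      · subst him; simpa using hj
      · rw [Function.update_of_ne him]
        exact Finset.mem_of_mem_erase (hA i (Finset.mem_erase.mpr ⟨him, hi⟩))
    · intro i hi
      have him : i ≠ m := fun h => hi (h ▸ hm)
      rw [Function.update_of_ne him]
      exact hout i fun hiS => hi (Finset.mem_of_mem_erase hiS)
  have hleft : ∀ j, ∀ σ ∈ (pmatch s A).filter (fun σ => σ m = j),
      Function.update (Function.update σ m m) m j = σ := by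
    intro j σ hσ
    obtain ⟨hσP, hσm⟩ := Finset.mem_filter.mp hσ
    rw [Function.update_idem, ← hσm, Function.update_eq_self]
  have hright : ∀ j, ∀ σ' ∈ pmatch s' (A' j),
      Function.update (Function.update σ' m j) m m = σ' := by
    intro j σ' hσ'
    obtain ⟨hinj, hA, hout⟩ := mem_pmatch.mp hσ'
    rw [Function.update_idem]
    have : σ' m = m := hout m (Finset.notMem_erase m s)
    have h2 := Function.update_eq_self m σ'
    rw [this] at h2
    exact h2
  -- avail at the minimum
  have havailm : ∀ σ, availS s A σ m = (A m).card := by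
    intro σ
    unfold availS
    rw [Finset.filter_true_of_mem]
    intro j hj i' hi' hlt
    exact absurd hlt (not_lt.mpr (hmins i' hi'))
  -- avail transfer for the other rows
  have havail : ∀ j, ∀ σ ∈ (pmatch s A).filter (fun σ => σ m = j), ∀ i ∈ s',
      availS s A σ i = availS s' (A' j) (Function.update σ m m) i := by
    intro j σ hσ i hi
    obtain ⟨hσP, hσm⟩ := Finset.mem_filter.mp hσ
    unfold availS
    congr 1
    ext j'
    simp only [Finset.mem_filter, Finset.mem_erase, hA'def]
    constructor
    · rintro ⟨hj'A, hcond⟩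
      refine ⟨⟨?_, hj'A⟩, ?_⟩
      · intro hj'
        exact hcond m hm (hmlt i hi) (hσm.trans hj'.symm)
      · intro i' hi' hlt
        rw [Function.update_of_ne (Finset.ne_of_mem_erase hi')]
        exact hcond i' (Finset.mem_of_mem_erase hi') hlt
    · rintro ⟨⟨hj'ne, hj'A⟩, hcond⟩
      refine ⟨hj'A, ?_⟩
      intro i' hi' hlt
      by_cases him : i' = m
      · subst him
        rw [hσm]
        exact fun h => hj'ne h.symm
      · have := hcond i' (Finset.mem_erase.mpr ⟨him, hi'⟩) hlt
        rwa [Function.update_of_ne him] at this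
  set Lj : Fin n → ℕ := fun j => (pmatch s' (A' j)).card with hLjdef
  have hmapsto : ∀ σ ∈ pmatch s A, σ m ∈ A m := fun σ hσ => (mem_pmatch.mp hσ).2.1 m hm
  have hfcard : ∀ j ∈ A m, ((pmatch s A).filter (fun σ => σ m = j)).card = Lj j := by
    intro j hj
    exact Finset.card_nbij' (fun σ => Function.update σ m m)
      (fun σ' => Function.update σ' m j) (hφmem j) (hψmem j hj) (hleft j) (hright j)
  have hcard : (pmatch s A).card = ∑ j ∈ A m, Lj j := by
    rw [Finset.card_eq_sum_card_fiberwise hmapsto]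
    exact Finset.sum_congr rfl hfcard
  have hprod : ∏ σ ∈ pmatch s A, ∏ i ∈ s, availS s A σ i
      = ∏ j ∈ A m, ∏ σ ∈ (pmatch s A).filter (fun σ => σ m = j), ∏ i ∈ s, availS s A σ i :=
    (Finset.prod_fiberwise_of_maps_to hmapsto _).symm
  have hinner : ∀ j ∈ A m,
      ∏ σ ∈ (pmatch s A).filter (fun σ => σ m = j), ∏ i ∈ s, availS s A σ i
      = (A m).card ^ (Lj j) * ∏ σ' ∈ pmatch s' (A' j), ∏ i ∈ s', availS s' (A' j) σ' i := by
    intro j hj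
    have step1 : ∀ σ ∈ (pmatch s A).filter (fun σ => σ m = j),
        ∏ i ∈ s, availS s A σ i
          = (A m).card * ∏ i ∈ s', availS s' (A' j) (Function.update σ m m) i := by
      intro σ hσ
      rw [← Finset.mul_prod_erase s _ hm, havailm σ]
      congr 1
      exact Finset.prod_congr rfl fun i hi => havail j σ hσ i hi
    rw [Finset.prod_congr rfl step1, Finset.prod_mul_distrib, Finset.prod_const, hfcard j hj]
    congr 1
    exact Finset.prod_nbij' (fun σ => Function.update σ m m)
      (fun σ' => Function.update σ' m j) (hφmem j) (hψmem j hj) (hleft j) (hright j)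
      (fun σ hσ => rfl)
  calc (pmatch s A).card ^ (pmatch s A).card
      = (∑ j ∈ A m, Lj j) ^ (∑ j ∈ A m, Lj j) := by rw [hcard]
    _ ≤ (A m).card ^ (∑ j ∈ A m, Lj j) * ∏ j ∈ A m, (Lj j) ^ (Lj j) := key_ineq _ _
    _ = ∏ j ∈ A m, ((A m).card ^ (Lj j) * (Lj j) ^ (Lj j)) := by
        rw [Finset.prod_mul_distrib, Finset.prod_pow_eq_pow_sum]
    _ ≤ ∏ j ∈ A m, ((A m).card ^ (Lj j) *
          ∏ σ' ∈ pmatch s' (A' j), ∏ i ∈ s', availS s' (A' j) σ' i) := by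
        apply Finset.prod_le_prod'
        intro j hj
        exact Nat.mul_le_mul_left _ (ih s' hss (A' j))
    _ = ∏ σ ∈ pmatch s A, ∏ i ∈ s, availS s A σ i := by
        rw [hprod]
        exact (Finset.prod_congr rfl hinner).symm
def availP (A : Fin n → Finset (Fin n)) (π : Equiv.Perm (Fin n)) (σ : Fin n → Fin n)
    (i : Fin n) : ℕ :=
  ((A i).filter fun j => ∀ i', π i' < π i → σ i' ≠ j).card

lemma lemma1P (A : Fin n → Finset (Fin n)) (π : Equiv.Perm (Fin n)) :
    (pmatch univ A).card ^ (pmatch univ A).card ≤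
      ∏ σ ∈ pmatch univ A, ∏ i : Fin n, availP A π σ i := by
  set B : Fin n → Finset (Fin n) := fun i => A (π.symm i) with hBdef
  have hmemB : ∀ σ ∈ pmatch univ A, (σ ∘ π.symm) ∈ pmatch univ B := by
    intro σ hσ
    obtain ⟨hinj, hA, -⟩ := mem_pmatch.mp hσ
    refine mem_pmatch.mpr ⟨?_, ?_, fun i hi => absurd (mem_univ i) hi⟩
    · intro a _ b _ hab
      have := hinj _ (mem_univ _) _ (mem_univ _) hab
      exact π.symm.injective this
    · intro i _
      exact hA _ (mem_univ _)
  have hmemA : ∀ σ' ∈ pmatch univ B, (σ' ∘ π) ∈ pmatch univ A := by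
    intro σ' hσ'
    obtain ⟨hinj, hB, -⟩ := mem_pmatch.mp hσ'
    refine mem_pmatch.mpr ⟨?_, ?_, fun i hi => absurd (mem_univ i) hi⟩
    · intro a _ b _ hab
      have := hinj _ (mem_univ _) _ (mem_univ _) hab
      exact π.injective this
    · intro i _
      have := hB (π i) (mem_univ _)
      simpa [hBdef] using this
  have hcards : (pmatch univ B).card = (pmatch univ A).card := by
    apply Finset.card_nbij' (fun σ' => σ' ∘ π) (fun σ => σ ∘ π.symm) hmemA hmemB
    · intro σ' _; funext x; simp
    · intro σ _; funext x; simp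
  have hval : ∀ σ' ∈ pmatch univ B,
      ∏ i ∈ univ, availS univ B σ' i = ∏ i : Fin n, availP A π (σ' ∘ π) i := by
    intro σ' _
    rw [← Equiv.prod_comp π (fun i => availS univ B σ' i)]
    apply Finset.prod_congr rfl
    intro x _
    unfold availS availP
    congr 1
    rw [show B (π x) = A x by simp [hBdef]]
    ext j
    simp only [Finset.mem_filter, Finset.mem_univ, true_implies, and_congr_right_iff]
    intro hjA
    constructor
    · intro hcond y hy
      exact hcond (π y) hy
    · intro hcond i' hi'
      have := hcond (π.symm i') (by simpa using hi')
      simpa using this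
  have hprods : ∏ σ' ∈ pmatch univ B, ∏ i ∈ univ, availS univ B σ' i
      = ∏ σ ∈ pmatch univ A, ∏ i : Fin n, availP A π σ i := by
    apply Finset.prod_nbij' (fun σ' => σ' ∘ π) (fun σ => σ ∘ π.symm) hmemA hmemB
    · intro σ' _; funext x; simp
    · intro σ _; funext x; simp
    · intro σ' hσ'
      exact hval σ' hσ'
  calc (pmatch univ A).card ^ (pmatch univ A).card
      = (pmatch univ B).card ^ (pmatch univ B).card := by rw [hcards]
    _ ≤ ∏ σ' ∈ pmatch univ B, ∏ i ∈ univ, availS univ B σ' i := lemma1 univ B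
    _ = _ := hprods

lemma myRankProd (T : Finset (Fin n)) (π : Equiv.Perm (Fin n)) :
    ∏ x ∈ T, (T.card - (T.filter fun y => π y < π x).card) = T.card ! := by
  set ρ : Fin n → ℕ := fun x => (T.filter fun y => π y < π x).card with hρdef
  have hmono : ∀ x ∈ T, ∀ x' ∈ T, π x < π x' → ρ x < ρ x' := by
    intro x hx x' hx' hlt
    apply Finset.card_lt_card
    constructor
    · intro y hy
      rw [Finset.mem_filter] at hy ⊢
      exact ⟨hy.1, hy.2.trans hlt⟩
    · intro hsub
      have hx'mem : x ∈ T.filter fun y => π y < π x' := Finset.mem_filter.mpr ⟨hx, hlt⟩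
      have := hsub hx'mem
      rw [Finset.mem_filter] at this
      exact absurd this.2 (lt_irrefl _)
  have hinj : ∀ x ∈ T, ∀ y ∈ T, ρ x = ρ y → x = y := by
    intro x hx y hy hxy
    by_contra hne
    have : π x ≠ π y := fun h => hne (π.injective h)
    rcases this.lt_or_gt with h | h
    · exact absurd hxy (hmono x hx y hy h).ne
    · exact absurd hxy.symm (hmono y hy x hx h).ne
  have hlt : ∀ x ∈ T, ρ x < T.card := by
    intro x hx
    have hsub : (T.filter fun y => π y < π x) ⊆ T.erase x := by
      intro y hy
      rw [Finset.mem_filter] at hy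
      refine Finset.mem_erase.mpr ⟨?_, hy.1⟩
      intro h
      rw [h] at hy
      exact absurd hy.2 (lt_irrefl _)
    have h1 : ρ x ≤ (T.erase x).card := Finset.card_le_card hsub
    have h2 : (T.erase x).card = T.card - 1 := Finset.card_erase_of_mem hx
    have h3 : 1 ≤ T.card := Finset.card_pos.mpr ⟨x, hx⟩
    omega
  have himg : T.image ρ = Finset.range T.card := by
    apply Finset.eq_of_subset_of_card_le
    · intro v hv
      obtain ⟨x, hx, rfl⟩ := Finset.mem_image.mp hv
      exact Finset.mem_range.mpr (hlt x hx)
    · rw [Finset.card_range, Finset.card_image_of_injOn]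
      intro x hx y hy hxy
      exact hinj x hx y hy hxy
  calc ∏ x ∈ T, (T.card - ρ x) = ∏ v ∈ T.image ρ, (T.card - v) :=
        (Finset.prod_image fun x hx y hy h => hinj x hx y hy h).symm
    _ = ∏ v ∈ Finset.range T.card, (T.card - v) := by rw [himg]
    _ = T.card ! := prod_range_fact _

lemma cardH (T : Finset (Fin n)) :
    (univ.filter fun h : Equiv.Perm (Fin n) => ∀ x, x ∉ T → h x = x).card = T.card ! := by
  rw [← Fintype.card_subtype]
  rw [Fintype.card_congr (Equiv.Perm.subtypeEquivSubtypePerm (fun x => x ∈ T)).symm]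
  rw [Fintype.card_perm, Fintype.card_coe]

lemma fiber_const (T : Finset (Fin n)) (i : Fin n) (hi : i ∈ T) (g : Fin n → ℕ) :
    (∏ h ∈ (univ.filter fun h : Equiv.Perm (Fin n) => ∀ x, x ∉ T → h x = x), g (h i)) ^ T.card
      = (∏ x ∈ T, g x) ^ T.card ! := by
  set H := univ.filter fun h : Equiv.Perm (Fin n) => ∀ x, x ∉ T → h x = x with hHdef
  have hfix : ∀ h ∈ H, ∀ x, x ∉ T → h x = x := by
    intro h hh
    exact (Finset.mem_filter.mp hh).2
  have hmemT : ∀ h ∈ H, ∀ x, x ∈ T → h x ∈ T := by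
    intro h hh x hx
    by_contra hnot
    have := hfix h hh (h x) hnot
    have := h.injective this
    rw [this] at hnot
    exact hnot hx
  have hmaps : ∀ h ∈ H, h i ∈ T := fun h hh => hmemT h hh i hi
  set c : Fin n → ℕ := fun x => (H.filter fun h => h i = x).card with hcdef
  have hswapmem : ∀ x ∈ T, ∀ y ∈ T, ∀ h ∈ H.filter (fun h => h i = x),
      h.trans (Equiv.swap x y) ∈ H.filter (fun h => h i = y) := by
    intro x hx y hy h hh
    obtain ⟨hhH, hhx⟩ := Finset.mem_filter.mp hh
    refine Finset.mem_filter.mpr ⟨Finset.mem_filter.mpr ⟨mem_univ _, ?_⟩, ?_⟩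
    · intro z hz
      simp only [Equiv.trans_apply]
      rw [hfix h hhH z hz]
      exact Equiv.swap_apply_of_ne_of_ne (fun h' => hz (h' ▸ hx)) (fun h' => hz (h' ▸ hy))
    · simp only [Equiv.trans_apply, hhx, Equiv.swap_apply_left]
  have hceq : ∀ x ∈ T, ∀ y ∈ T, c x = c y := by
    intro x hx y hy
    apply Finset.card_nbij' (fun h : Equiv.Perm (Fin n) => h.trans (Equiv.swap x y)) (fun h : Equiv.Perm (Fin n) => h.trans (Equiv.swap x y))
      (hswapmem x hx y hy)
    · intro h hh
      have := hswapmem y hy x hx h hh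
      rwa [Equiv.swap_comm y x] at this
    · intro h _
      ext z
      simp [Equiv.swap_apply_self]
    · intro h _
      ext z
      simp [Equiv.swap_apply_self]
  have hsum : ∑ x ∈ T, c x = T.card ! := by
    rw [hcdef, ← Finset.card_eq_sum_card_fiberwise hmaps, hHdef, cardH]
  have hct : ∀ x ∈ T, c x * T.card = T.card ! := by
    intro x hx
    have : ∑ y ∈ T, c y = ∑ y ∈ T, c x := Finset.sum_congr rfl fun y hy => hceq y hy x hx
    rw [this, Finset.sum_const, smul_eq_mul, mul_comm] at hsum
    exact hsum
  have hdecomp : ∏ h ∈ H, g (h i) = ∏ x ∈ T, g x ^ c x := by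
    rw [← Finset.prod_fiberwise_of_maps_to hmaps (fun h => g (h i))]
    apply Finset.prod_congr rfl
    intro x hx
    rw [Finset.prod_congr rfl (fun h hh => by rw [(Finset.mem_filter.mp hh).2]),
      Finset.prod_const]
  rw [hdecomp, ← Finset.prod_pow]
  rw [Finset.prod_congr rfl (fun x hx => by rw [← pow_mul, hct x hx]), Finset.prod_pow]

lemma lemma2 (A : Fin n → Finset (Fin n)) (σ : Fin n → Fin n) (hσ : Function.Injective σ)
    (hmem : ∀ r, σ r ∈ A r) (i : Fin n) :
    (∏ π : Equiv.Perm (Fin n), availP A π σ i) ^ ((A i).card ! * (A i).card) =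
      ((A i).card !) ^ ((A i).card ! * n !) := by
  have hbij : Function.Bijective σ := Finite.injective_iff_bijective.mp hσ
  set e : Equiv.Perm (Fin n) := Equiv.ofBijective σ hbij with hedef
  have he : ∀ x, e x = σ x := fun _ => rfl
  set T : Finset (Fin n) := (A i).image e.symm with hTdef
  have hT : T.card = (A i).card := Finset.card_image_of_injective _ e.symm.injective
  have hiT : i ∈ T := Finset.mem_image.mpr ⟨σ i, hmem i, by rw [Equiv.symm_apply_eq, he]⟩
  have stepA : ∀ π : Equiv.Perm (Fin n),
      availP A π σ i = T.card - (T.filter fun x => π x < π i).card := by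
    intro π
    unfold availP
    have hpred : (A i).filter (fun j => ∀ i', π i' < π i → σ i' ≠ j)
        = (A i).filter (fun j => ¬ (π (e.symm j) < π i)) := by
      apply Finset.filter_congr
      intro j hj
      constructor
      · intro hcond hclt
        exact hcond (e.symm j) hclt (by rw [← he, Equiv.apply_symm_apply])
      · intro hcond i' hlt hval
        have hi' : i' = e.symm j := by rw [Equiv.eq_symm_apply, he, hval]
        rw [hi'] at hlt
        exact hcond hlt
    rw [hpred]
    have hcardim : ((A i).filter fun j => ¬ (π (e.symm j) < π i)).card
        = (T.filter fun x => ¬ (π x < π i)).card := by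
      rw [hTdef, Finset.filter_image, Finset.card_image_of_injective _ e.symm.injective]
    rw [hcardim]
    have := Finset.card_filter_add_card_filter_not (s := T)
      (p := fun x => π x < π i)
    omega
  set H := univ.filter fun h : Equiv.Perm (Fin n) => ∀ x, x ∉ T → h x = x with hHdef
  have hfix : ∀ h ∈ H, ∀ x, x ∉ T → h x = x := fun h hh => (Finset.mem_filter.mp hh).2
  have hmemT : ∀ h ∈ H, ∀ x, x ∈ T → h x ∈ T := by
    intro h hh x hx
    by_contra hnot
    have h1 := hfix h hh (h x) hnot
    have h2 := h.injective h1
    rw [h2] at hnot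
    exact hnot hx
  have hsymmT : ∀ h ∈ H, ∀ z, z ∈ T → h.symm z ∈ T := by
    intro h hh z hz
    by_contra hnot
    have h1 := hfix h hh (h.symm z) hnot
    rw [Equiv.apply_symm_apply] at h1
    rw [← h1] at hnot
    exact hnot hz
  have hXH : (∏ π : Equiv.Perm (Fin n), availP A π σ i) ^ T.card !
      = ∏ π : Equiv.Perm (Fin n), ∏ h ∈ H, availP A (h.trans π) σ i := by
    rw [← Finset.prod_comm, ← cardH T, ← hHdef, ← Finset.prod_const]
    apply Finset.prod_congr rfl
    intro h hh
    exact (Equiv.prod_comp (Equiv.mulRight h) (fun π => availP A π σ i)).symm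
  have hinner : ∀ π : Equiv.Perm (Fin n),
      (∏ h ∈ H, availP A (h.trans π) σ i) ^ T.card = (T.card !) ^ T.card ! := by
    intro π
    have hval : ∀ h ∈ H, availP A (h.trans π) σ i
        = T.card - (T.filter fun y => π y < π (h i)).card := by
      intro h hh
      rw [stepA (h.trans π)]
      congr 1
      apply Finset.card_nbij' h h.symm
      · intro x hx
        rw [Finset.mem_coe, Finset.mem_filter] at hx ⊢
        exact ⟨hmemT h hh x hx.1, hx.2⟩
      · intro z hz
        rw [Finset.mem_coe, Finset.mem_filter] at hz ⊢
        refine ⟨hsymmT h hh z hz.1, ?_⟩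
        simpa using hz.2
      · intro x _; simp
      · intro z _; simp
    rw [Finset.prod_congr rfl hval]
    rw [show (fun h : Equiv.Perm (Fin n) => T.card - (T.filter fun y => π y < π (h i)).card)
      = (fun h : Equiv.Perm (Fin n) =>
          (fun x => T.card - (T.filter fun y => π y < π x).card) (h i)) from rfl]
    rw [hHdef]
    rw [fiber_const T i hiT (fun x => T.card - (T.filter fun y => π y < π x).card)]
    rw [myRankProd T π]
  calc (∏ π : Equiv.Perm (Fin n), availP A π σ i) ^ ((A i).card ! * (A i).card)
      = ((∏ π : Equiv.Perm (Fin n), availP A π σ i) ^ T.card !) ^ T.card := by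
        rw [← pow_mul, hT]
    _ = ∏ π : Equiv.Perm (Fin n), (∏ h ∈ H, availP A (h.trans π) σ i) ^ T.card := by
        rw [hXH, ← Finset.prod_pow]
    _ = ∏ _π : Equiv.Perm (Fin n), (T.card !) ^ T.card ! :=
        Finset.prod_congr rfl fun π _ => hinner π
    _ = ((A i).card !) ^ ((A i).card ! * n !) := by
        rw [Finset.prod_const, ← pow_mul, hT, Finset.card_univ, Fintype.card_perm,
          Fintype.card_fin]

lemma bregman (A : Fin n → Finset (Fin n)) :
    ((pmatch univ A).card : ℝ) ≤
      ∏ i : Fin n, (((A i).card ! : ℝ) ^ ((1 : ℝ) / ((A i).card : ℝ))) := by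
  set L := (pmatch univ A).card with hLdef
  have hβnn : (0:ℝ) ≤ ∏ i : Fin n, (((A i).card ! : ℝ) ^ ((1 : ℝ) / ((A i).card : ℝ))) :=
    Finset.prod_nonneg fun i _ => Real.rpow_nonneg (by positivity) _
  rcases Nat.eq_zero_or_pos L with h0 | hpos
  · rw [h0, Nat.cast_zero]
    exact hβnn
  have hnat : L ^ (L * n !) ≤ ∏ σ ∈ pmatch univ A, ∏ i : Fin n,
      ∏ π : Equiv.Perm (Fin n), availP A π σ i := by
    calc L ^ (L * n !) = (L ^ L) ^ n ! := by rw [pow_mul]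
      _ = ∏ _π : Equiv.Perm (Fin n), L ^ L := by
          rw [Finset.prod_const, Finset.card_univ, Fintype.card_perm, Fintype.card_fin]
      _ ≤ ∏ π : Equiv.Perm (Fin n), ∏ σ ∈ pmatch univ A, ∏ i : Fin n, availP A π σ i :=
          Finset.prod_le_prod' fun π _ => lemma1P A π
      _ = ∏ σ ∈ pmatch univ A, ∏ π : Equiv.Perm (Fin n), ∏ i : Fin n, availP A π σ i :=
          Finset.prod_comm
      _ = ∏ σ ∈ pmatch univ A, ∏ i : Fin n, ∏ π : Equiv.Perm (Fin n), availP A π σ i :=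
          Finset.prod_congr rfl fun σ _ => Finset.prod_comm
  have hX : ∀ σ ∈ pmatch univ A, ∀ i : Fin n,
      ((∏ π : Equiv.Perm (Fin n), availP A π σ i : ℕ) : ℝ)
        = (((A i).card ! : ℝ) ^ ((1 : ℝ) / ((A i).card : ℝ))) ^ n ! := by
    intro σ hσ i
    obtain ⟨hinj, hA, -⟩ := mem_pmatch.mp hσ
    have hinj' : Function.Injective σ := fun a b h => hinj a (mem_univ a) b (mem_univ b) h
    have hmem' : ∀ r, σ r ∈ A r := fun r => hA r (mem_univ r)
    have h2 := lemma2 A σ hinj' hmem' i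
    set t := (A i).card with htdef
    have ht : 1 ≤ t := Finset.card_pos.mpr ⟨σ i, hmem' i⟩
    have htR : (t : ℝ) ≠ 0 := Nat.cast_ne_zero.mpr (by omega)
    have hXnn : (0:ℝ) ≤ ((∏ π : Equiv.Perm (Fin n), availP A π σ i : ℕ) : ℝ) :=
      Nat.cast_nonneg _
    have hγnn : (0:ℝ) ≤ ((t ! : ℝ) ^ ((1 : ℝ) / (t : ℝ))) ^ n ! :=
      pow_nonneg (Real.rpow_nonneg (by positivity) _) _
    have hne : t ! * t ≠ 0 := by positivity
    have hkey : (((∏ π : Equiv.Perm (Fin n), availP A π σ i : ℕ) : ℝ)) ^ (t ! * t)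
        = (((t ! : ℝ) ^ ((1 : ℝ) / (t : ℝ))) ^ n !) ^ (t ! * t) := by
      have hlhs : (((∏ π : Equiv.Perm (Fin n), availP A π σ i : ℕ) : ℝ)) ^ (t ! * t)
          = ((t ! : ℝ)) ^ (t ! * n !) := by
        exact_mod_cast congrArg (fun k : ℕ => (k : ℝ)) h2
      rw [hlhs, ← pow_mul, ← Real.rpow_natCast ((t ! : ℝ)) (t ! * n !),
        ← Real.rpow_natCast ((t ! : ℝ) ^ ((1 : ℝ) / (t : ℝ))) (n ! * (t ! * t)),
        ← Real.rpow_mul (by positivity)]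
      congr 1
      push_cast
      field_simp
    exact le_antisymm
      ((pow_le_pow_iff_left₀ hXnn hγnn hne).mp hkey.le)
      ((pow_le_pow_iff_left₀ hγnn hXnn hne).mp hkey.ge)
  have hR : ((L : ℝ)) ^ (L * n !)
      ≤ (∏ i : Fin n, (((A i).card ! : ℝ) ^ ((1 : ℝ) / ((A i).card : ℝ)))) ^ (n ! * L) := by
    calc ((L : ℝ)) ^ (L * n !)
        ≤ ((∏ σ ∈ pmatch univ A, ∏ i : Fin n,
            ∏ π : Equiv.Perm (Fin n), availP A π σ i : ℕ) : ℝ) := by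
          exact_mod_cast hnat
      _ = ∏ σ ∈ pmatch univ A, ∏ i : Fin n,
            ((∏ π : Equiv.Perm (Fin n), availP A π σ i : ℕ) : ℝ) := by
          push_cast; rfl
      _ = ∏ σ ∈ pmatch univ A, ∏ i : Fin n,
            ((((A i).card ! : ℝ) ^ ((1 : ℝ) / ((A i).card : ℝ))) ^ n !) := by
          refine Finset.prod_congr rfl fun σ hσ => Finset.prod_congr rfl fun i _ => ?_
          exact hX σ hσ i
      _ = ∏ σ ∈ pmatch univ A,
            ((∏ i : Fin n, (((A i).card ! : ℝ) ^ ((1 : ℝ) / ((A i).card : ℝ)))) ^ n !) := by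
          refine Finset.prod_congr rfl fun σ _ => ?_
          rw [Finset.prod_pow]
      _ = (∏ i : Fin n, (((A i).card ! : ℝ) ^ ((1 : ℝ) / ((A i).card : ℝ)))) ^ (n ! * L) := by
          rw [Finset.prod_const, ← pow_mul]
  have hne2 : L * n ! ≠ 0 := by
    have := Nat.factorial_pos n
    positivity
  rw [show n ! * L = L * n ! from mul_comm _ _] at hR
  exact (pow_le_pow_iff_left₀ (Nat.cast_nonneg _) hβnn hne2).mp hR
def rects (n m : ℕ) : Finset (Fin m → Fin n → Fin n) :=
  univ.filter fun M =>
    (∀ i, Function.Bijective (M i)) ∧ ∀ j, Function.Injective fun i => M i j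

lemma mem_rects {m : ℕ} {M : Fin m → Fin n → Fin n} :
    M ∈ rects n m ↔ (∀ i, Function.Bijective (M i)) ∧ ∀ j, Function.Injective fun i => M i j := by
  simp [rects]

lemma rects_zero : (rects n 0).card = 1 := by
  rw [rects, Finset.filter_true_of_mem (fun M _ => ⟨fun i => i.elim0, fun j a => a.elim0⟩)]
  simp

lemma rects_step {m : ℕ} (_hm : m < n) :
    ((rects n (m + 1)).card : ℝ) ≤
      (rects n m).card * ((((n - m) ! : ℝ)) ^ ((1 : ℝ) / ((n - m : ℕ) : ℝ))) ^ n := by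
  set trunc : (Fin (m + 1) → Fin n → Fin n) → (Fin m → Fin n → Fin n) :=
    fun M i j => M i.castSucc j with htrunc
  have hmaps : ∀ M ∈ rects n (m + 1), trunc M ∈ rects n m := by
    intro M hM
    obtain ⟨hrow, hcol⟩ := mem_rects.mp hM
    refine mem_rects.mpr ⟨fun i => hrow i.castSucc, fun j a b hab => ?_⟩
    exact Fin.castSucc_injective _ (hcol j hab)
  have hcard : (rects n (m + 1)).card
      = ∑ R ∈ rects n m, ((rects n (m + 1)).filter (fun M => trunc M = R)).card :=
    Finset.card_eq_sum_card_fiberwise hmaps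
  have hfiber : ∀ R ∈ rects n m,
      ((((rects n (m + 1)).filter (fun M => trunc M = R)).card : ℝ))
        ≤ ((((n - m) ! : ℝ)) ^ ((1 : ℝ) / ((n - m : ℕ) : ℝ))) ^ n := by
    intro R hR
    set A : Fin n → Finset (Fin n) := fun j => (univ.image (fun i : Fin m => R i j))ᶜ
      with hAdef
    have hAcard : ∀ j, (A j).card = n - m := by
      intro j
      rw [hAdef, Finset.card_compl,
        Finset.card_image_of_injective _ ((mem_rects.mp hR).2 j), Finset.card_univ,
        Fintype.card_fin, Fintype.card_fin]
    have hinj : ((rects n (m + 1)).filter (fun M => trunc M = R)).card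
        ≤ (pmatch univ A).card := by
      apply Finset.card_le_card_of_injOn (fun M => fun j => M (Fin.last m) j)
      · intro M hM
        obtain ⟨hMr, htr⟩ := Finset.mem_filter.mp hM
        obtain ⟨hrow, hcol⟩ := mem_rects.mp hMr
        refine mem_pmatch.mpr ⟨?_, ?_, fun j hj => absurd (mem_univ j) hj⟩
        · intro a _ b _ hab
          exact (hrow (Fin.last m)).1 hab
        · intro j _
          rw [hAdef, Finset.mem_compl]
          intro hmem
          obtain ⟨i, -, hi⟩ := Finset.mem_image.mp hmem
          have h1 : M i.castSucc j = M (Fin.last m) j := by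
            rw [← (show R i j = M (Fin.last m) j from hi), ← htr]
          have h2 := hcol j h1
          exact absurd h2 (Fin.castSucc_lt_last i).ne
      · intro M hM M' hM' heq
        have htr : trunc M = trunc M' := by
          rw [(Finset.mem_filter.mp hM).2, (Finset.mem_filter.mp hM').2]
        funext i j
        refine Fin.lastCases ?_ ?_ i
        · exact congrFun heq j
        · intro i'
          exact congrFun (congrFun htr i') j
    calc ((((rects n (m + 1)).filter (fun M => trunc M = R)).card : ℝ))
        ≤ ((pmatch univ A).card : ℝ) := by exact_mod_cast hinj
      _ ≤ ∏ j : Fin n, (((A j).card ! : ℝ) ^ ((1 : ℝ) / ((A j).card : ℝ))) := bregman A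
      _ = ((((n - m) ! : ℝ)) ^ ((1 : ℝ) / ((n - m : ℕ) : ℝ))) ^ n := by
          rw [Finset.prod_congr rfl (fun j _ => by rw [hAcard j]), Finset.prod_const,
            Finset.card_univ, Fintype.card_fin]
  calc ((rects n (m + 1)).card : ℝ)
      = ∑ R ∈ rects n m, ((((rects n (m + 1)).filter (fun M => trunc M = R)).card : ℝ)) := by
        rw [hcard]; push_cast; rfl
    _ ≤ ∑ _R ∈ rects n m, ((((n - m) ! : ℝ)) ^ ((1 : ℝ) / ((n - m : ℕ) : ℝ))) ^ n :=
        Finset.sum_le_sum hfiber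
    _ = (rects n m).card * ((((n - m) ! : ℝ)) ^ ((1 : ℝ) / ((n - m : ℕ) : ℝ))) ^ n := by
        rw [Finset.sum_const, nsmul_eq_mul]

lemma rects_chain : ∀ m : ℕ, m ≤ n →
    ((rects n m).card : ℝ) ≤
      ∏ k ∈ Finset.range m, (((n - k) ! : ℝ)) ^ ((n : ℝ) / ((n - k : ℕ) : ℝ)) := by
  intro m
  induction m with
  | zero => intro _; rw [rects_zero]; simp
  | succ m ih =>
      intro hm
      have hmn : m < n := hm
      have hstep := rects_step hmn
      have hprev := ih (le_of_lt hmn)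
      have hpow : ((((n - m) ! : ℝ)) ^ ((1 : ℝ) / ((n - m : ℕ) : ℝ))) ^ n
          = (((n - m) ! : ℝ)) ^ ((n : ℝ) / ((n - m : ℕ) : ℝ)) := by
        rw [← Real.rpow_natCast ((((n - m) ! : ℝ)) ^ ((1 : ℝ) / ((n - m : ℕ) : ℝ))) n,
          ← Real.rpow_mul (by positivity)]
        congr 1
        ring
      rw [Finset.prod_range_succ]
      calc ((rects n (m + 1)).card : ℝ)
          ≤ (rects n m).card * ((((n - m) ! : ℝ)) ^ ((1 : ℝ) / ((n - m : ℕ) : ℝ))) ^ n :=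
            hstep
        _ ≤ (∏ k ∈ Finset.range m, (((n - k) ! : ℝ)) ^ ((n : ℝ) / ((n - k : ℕ) : ℝ))) *
              ((((n - m) ! : ℝ)) ^ ((1 : ℝ) / ((n - m : ℕ) : ℝ))) ^ n := by
            apply mul_le_mul_of_nonneg_right hprev
            positivity
        _ = _ := by rw [hpow]

end BregmanAux

/-- `|LS_n|`, the number of Latin squares of order `n`. -/
noncomputable def latinSquareCount (n : ℕ) : ℕ :=
  Nat.card {M : Fin n → Fin n → Fin n // IsLatinSquare n M}

lemma latinSquareCount_eq (n : ℕ) : latinSquareCount n = (BregmanAux.rects n n).card := by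
  classical
  rw [latinSquareCount, Nat.card_eq_fintype_card, Fintype.card_subtype, BregmanAux.rects]
  congr 1
  apply Finset.filter_congr
  intro M _
  unfold IsLatinSquare
  constructor
  · rintro ⟨h1, h2⟩; exact ⟨h1, fun j => (h2 j).1⟩
  · rintro ⟨h1, h2⟩; exact ⟨h1, fun j => Finite.injective_iff_bijective.mp (h2 j)⟩

/-- Upper bound: `|LS_n| ≤ ∏_{k=1}^{n} (k!)^{n/k}` (real exponents). -/
theorem latinSquareCount_upper_bound (n : ℕ) (hn : 1 ≤ n) :
    (latinSquareCount n : ℝ) ≤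
      ∏ k ∈ Finset.Icc 1 n, (Nat.factorial k : ℝ) ^ ((n : ℝ) / (k : ℝ)) := by
  rw [latinSquareCount_eq]
  calc ((BregmanAux.rects n n).card : ℝ)
      ≤ ∏ k ∈ Finset.range n, (((n - k) ! : ℝ)) ^ ((n : ℝ) / ((n - k : ℕ) : ℝ)) :=
        BregmanAux.rects_chain n le_rfl
    _ = ∏ k ∈ Finset.Icc 1 n, (Nat.factorial k : ℝ) ^ ((n : ℝ) / (k : ℝ)) := by
        apply Finset.prod_nbij' (fun m => n - m) (fun k => n - k)
        · intro m hm; rw [Finset.mem_range] at hm; rw [Finset.mem_Icc]; omega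
        · intro k hk; rw [Finset.mem_Icc] at hk; rw [Finset.mem_range]; omega
        · intro m hm; rw [Finset.mem_range] at hm; omega
        · intro k hk; rw [Finset.mem_Icc] at hk; omega
        · intro m _; rfl
end

section
/- Let U_{n,k} := ∏_{ℓ=1}^{n−k} (ℓ!)^{n/ℓ} with real-valued exponents. If (k_n) is a sequence of nonnegative integers with k_n ≤ n and n − k_n → ∞ as n → ∞, then log U_{n,k_n} / ( n (n − k_n) log(n − k_n) ) converges to 1 as n → ∞. -/
open Filter

lemma log_fact_le (ℓ : ℕ) : Real.log (Nat.factorial ℓ) ≤ ℓ * Real.log ℓ := by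
  rw [← Real.log_pow]
  apply Real.log_le_log (by positivity)
  exact_mod_cast Nat.factorial_le_pow ℓ

lemma log_fact_ge (m : ℕ) : (m : ℝ) * Real.log m - m ≤ Real.log (Nat.factorial m) := by
  induction m with
  | zero => simp
  | succ m ih =>
    rcases Nat.eq_zero_or_pos m with h | h
    · subst h; norm_num [Nat.factorial]
    have hm : (0:ℝ) < m := by exact_mod_cast h
    have hlog : Real.log ((m+1 : ℝ) / m) ≤ 1 / m := by
      have := Real.log_le_sub_one_of_pos (x := (m+1 : ℝ) / m) (by positivity)
      have : Real.log ((m+1:ℝ)/m) ≤ (m+1:ℝ)/m - 1 := this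
      calc Real.log ((m+1:ℝ)/m) ≤ (m+1:ℝ)/m - 1 := this
        _ = 1 / m := by field_simp; ring
    have key : (m:ℝ) * Real.log (m+1) ≤ m * Real.log m + 1 := by
      have : Real.log ((m+1:ℝ)) - Real.log m ≤ 1 / m := by
        rwa [← Real.log_div (by positivity) (ne_of_gt hm)]
      have h2 : (m:ℝ) * (Real.log (m+1) - Real.log m) ≤ m * (1/m) :=
        mul_le_mul_of_nonneg_left this hm.le
      have h3 : (m:ℝ) * (1/m) = 1 := by field_simp
      nlinarith
    have hfac : Real.log (Nat.factorial (m+1)) =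
        Real.log (Nat.factorial m) + Real.log (m+1) := by
      rw [Nat.factorial_succ]
      push_cast
      rw [Real.log_mul (by positivity) (by positivity), add_comm]
    rw [hfac]
    push_cast
    nlinarith [Real.log_nonneg (show (1:ℝ) ≤ (m:ℝ)+1 by linarith)]

noncomputable def fsum (m : ℕ) : ℝ :=
  ∑ ℓ ∈ Finset.Icc 1 m, Real.log (Nat.factorial ℓ) / ℓ

lemma sum_log_eq (m : ℕ) :
    ∑ ℓ ∈ Finset.Icc 1 m, Real.log ℓ = Real.log (Nat.factorial m) := by
  rw [← Real.log_prod (fun ℓ hℓ => by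
    have h1 := (Finset.mem_Icc.mp hℓ).1
    have : (0:ℝ) < ℓ := by exact_mod_cast h1
    exact ne_of_gt this)]
  congr 1
  rw [← Nat.cast_prod]
  congr 1
  rw [← Finset.Ico_add_one_right_eq_Icc]
  exact Finset.prod_Ico_id_eq_factorial m

lemma fsum_le (m : ℕ) : fsum m ≤ Real.log (Nat.factorial m) := by
  rw [← sum_log_eq]
  apply Finset.sum_le_sum
  intro ℓ hℓ
  have h1 := (Finset.mem_Icc.mp hℓ).1
  have hℓ0 : (0:ℝ) < ℓ := by exact_mod_cast h1
  rw [div_le_iff₀ hℓ0]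
  calc Real.log (Nat.factorial ℓ) ≤ ℓ * Real.log ℓ := log_fact_le ℓ
    _ = Real.log ℓ * ℓ := mul_comm _ _

lemma fsum_ge (m : ℕ) : Real.log (Nat.factorial m) - m ≤ fsum m := by
  have h : ∑ ℓ ∈ Finset.Icc 1 m, (Real.log ℓ - 1) ≤ fsum m := by
    apply Finset.sum_le_sum
    intro ℓ hℓ
    have h1 := (Finset.mem_Icc.mp hℓ).1
    have hℓ0 : (0:ℝ) < ℓ := by exact_mod_cast h1
    rw [le_div_iff₀ hℓ0]
    have := log_fact_ge ℓ
    nlinarith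
  calc Real.log (Nat.factorial m) - m
      = ∑ ℓ ∈ Finset.Icc 1 m, (Real.log ℓ - 1) := by
        rw [Finset.sum_sub_distrib, sum_log_eq, Finset.sum_const, Nat.card_Icc]
        simp
    _ ≤ fsum m := h

lemma hg_tendsto :
    Tendsto (fun m : ℕ => fsum m / ((m:ℝ) * Real.log m)) atTop (nhds 1) := by
  have hlog : Tendsto (fun m : ℕ => Real.log m) atTop atTop :=
    Real.tendsto_log_atTop.comp tendsto_natCast_atTop_atTop
  have hlow : Tendsto (fun m : ℕ => 1 - 2 / Real.log m) atTop (nhds 1) := by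
    have h0 : Tendsto (fun m : ℕ => 2 / Real.log m) atTop (nhds 0) := by
      simpa [div_eq_mul_inv] using (hlog.inv_tendsto_atTop).const_mul (2:ℝ)
    simpa using (tendsto_const_nhds (x := (1:ℝ))).sub h0
  apply tendsto_of_tendsto_of_tendsto_of_le_of_le' hlow tendsto_const_nhds
  · filter_upwards [eventually_ge_atTop 3] with m hm
    have hm0 : (0:ℝ) < m := by positivity
    have hlogm : (1:ℝ) < Real.log m := by
      have : Real.exp 1 < m := by
        have : Real.exp 1 < 3 := by
          have := Real.exp_one_lt_d9; linarith
        calc Real.exp 1 < 3 := this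
          _ ≤ m := by exact_mod_cast hm
      calc (1:ℝ) = Real.log (Real.exp 1) := (Real.log_exp 1).symm
        _ < Real.log m := Real.log_lt_log (Real.exp_pos 1) this
    have hD : (0:ℝ) < (m:ℝ) * Real.log m := by positivity
    have hlb : (m:ℝ) * Real.log m - 2*m ≤ fsum m := by
      have := fsum_ge m
      have := log_fact_ge m
      linarith
    have heq : ((m:ℝ) * Real.log m - 2*m) / ((m:ℝ) * Real.log m)
        = 1 - 2 / Real.log m := by
      field_simp
    rw [← heq]
    gcongr
  · filter_upwards [eventually_ge_atTop 3] with m hm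
    have hm0 : (0:ℝ) < m := by positivity
    have hlogm : (0:ℝ) < Real.log m := by
      apply Real.log_pos; exact_mod_cast Nat.lt_of_lt_of_le (by norm_num) hm
    have hub : fsum m ≤ (m:ℝ) * Real.log m := (fsum_le m).trans (log_fact_le m)
    rw [div_le_one (by positivity)]
    exact hub

/-- `U_{n,k} := ∏_{ℓ=1}^{n-k} (ℓ!)^{n/ℓ}` with real exponents. -/
noncomputable def U (n k : ℕ) : ℝ :=
  ∏ ℓ ∈ Finset.Icc 1 (n - k), (Nat.factorial ℓ : ℝ) ^ ((n : ℝ) / (ℓ : ℝ))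

/-- If `k_n ≤ n` and `n - k_n → ∞`, then `log U_{n,k_n} ∼ n (n - k_n) log (n - k_n)`. -/
theorem log_U_asymptotic (k : ℕ → ℕ) (hk : ∀ n, k n ≤ n)
    (hdiff : Tendsto (fun n : ℕ => n - k n) atTop atTop) :
    Tendsto (fun n : ℕ =>
        Real.log (U n (k n)) /
          ((n : ℝ) * ((n - k n : ℕ) : ℝ) * Real.log ((n - k n : ℕ) : ℝ)))
      atTop (nhds 1) := by
  have key := hg_tendsto.comp hdiff
  apply key.congr'
  filter_upwards [hdiff.eventually (eventually_ge_atTop 1)] with n hm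
  have hn1 : 1 ≤ n := le_trans hm (Nat.sub_le n (k n))
  have hn0 : ((n:ℝ)) ≠ 0 := by
    have : (0:ℝ) < n := by exact_mod_cast hn1
    exact ne_of_gt this
  have hlogU : Real.log (U n (k n)) = (n:ℝ) * fsum (n - k n) := by
    unfold U fsum
    rw [Real.log_prod (fun ℓ hℓ => by
      have : (0:ℝ) < (Nat.factorial ℓ : ℝ) := by exact_mod_cast ℓ.factorial_pos
      exact ne_of_gt (Real.rpow_pos_of_pos this _))]
    rw [Finset.mul_sum]
    apply Finset.sum_congr rfl
    intro ℓ hℓ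
    have : (0:ℝ) < (Nat.factorial ℓ : ℝ) := by exact_mod_cast ℓ.factorial_pos
    rw [Real.log_rpow this]
    ring
  simp only [Function.comp]
  rw [hlogU, mul_assoc, mul_div_mul_left _ _ hn0]
end

section
/- Let n ≥ 1 and 1 ≤ r ≤ n, and let B be an n × n matrix with entries in {0,1} such that every row of B has exactly r entries equal to 1. Then the permanent of B, defined as per B = Σ_{σ ∈ S_n} ∏_{i=1}^{n} B_{i,σ(i)}, satisfies per B ≤ (r!)^{n/r}, where the exponent n/r is a real number and the inequality is between real numbers. -/
open Finset Real
section
open scoped Classical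
variable {n : ℕ} (B : Matrix (Fin n) (Fin n) ℕ)

noncomputable def matchings (R C : Finset (Fin n)) : Finset (Fin n → Fin n) :=
  Finset.univ.filter (fun M => Set.BijOn M ↑R ↑C ∧ (∀ i ∈ R, B i (M i) = 1) ∧
    (∀ i, i ∉ R → M i = i))

noncomputable def P (R C : Finset (Fin n)) : ℕ := (matchings B R C).card

noncomputable def d (i : Fin n) (C : Finset (Fin n)) : ℕ :=
  (C.filter (fun k => B i k = 1)).card

lemma mem_matchings {R C : Finset (Fin n)} {M : Fin n → Fin n} :
    M ∈ matchings B R C ↔ Set.BijOn M ↑R ↑C ∧ (∀ i ∈ R, B i (M i) = 1) ∧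
      (∀ i, i ∉ R → M i = i) := by
  simp [matchings]

lemma P_empty : P B ∅ ∅ = 1 := by
  rw [P, Finset.card_eq_one]
  refine ⟨id, ?_⟩
  ext M
  simp only [mem_matchings, Finset.mem_singleton]
  constructor
  · rintro ⟨-, -, h⟩
    funext i; exact h i (by simp)
  · rintro rfl
    exact ⟨by simp [Set.BijOn], by simp, fun i _ => rfl⟩

lemma P_expand {R C : Finset (Fin n)} {i₀ : Fin n} (hi₀ : i₀ ∈ R) :
    ∑ k ∈ C.filter (fun k => B i₀ k = 1),
      ((matchings B R C).filter (fun M => M i₀ = k)).card = P B R C := by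
  rw [P]
  refine (Finset.card_eq_sum_card_fiberwise ?_).symm
  intro M hM
  rw [Finset.mem_coe, mem_matchings] at hM
  exact Finset.mem_filter.2 ⟨Finset.mem_coe.1 (hM.1.mapsTo hi₀), hM.2.1 i₀ hi₀⟩

lemma d_erase {C : Finset (Fin n)} {j k : Fin n} (hk : k ∈ C) :
    d B j (C.erase k) = if B j k = 1 then d B j C - 1 else d B j C := by
  unfold d
  rw [Finset.filter_erase]
  split_ifs with h
  · exact Finset.card_erase_of_mem (Finset.mem_filter.2 ⟨hk, h⟩)
  · rw [Finset.erase_eq_of_notMem]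
    simp [h]

lemma convexity_lemma {ι : Type*} (K : Finset ι) (q : ι → ℕ) (hK : K.Nonempty) :
    ((∑ k ∈ K, (q k : ℝ)) / K.card) ^ (∑ k ∈ K, (q k : ℝ)) ≤
      ∏ k ∈ K, (q k : ℝ) ^ (q k : ℝ) := by
  set p : ℝ := ∑ k ∈ K, (q k : ℝ) with hp
  have hp0 : 0 ≤ p := Finset.sum_nonneg fun k _ => by positivity
  have hd0 : (0 : ℝ) < K.card := by exact_mod_cast hK.card_pos
  have key : ∀ x : ℝ, 0 ≤ x → x ^ x = Real.exp (x * Real.log x) := by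
    intro x hx
    rcases hx.eq_or_lt with h | h
    · simp [← h]
    · rw [Real.rpow_def_of_pos h, mul_comm]
  have hRHS : ∏ k ∈ K, (q k : ℝ) ^ (q k : ℝ) =
      Real.exp (∑ k ∈ K, (q k : ℝ) * Real.log (q k)) := by
    rw [Real.exp_sum]
    refine Finset.prod_congr rfl fun k _ => ?_
    rw [key _ (by positivity), mul_comm]
  rcases hp0.eq_or_lt with h | hppos
  · have hq0 : ∀ k ∈ K, (q k : ℝ) = 0 := by
      intro k hk
      have := (Finset.sum_eq_zero_iff_of_nonneg (fun k _ => by positivity)).1 h.symm k hk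
      exact this
    rw [hRHS, Finset.sum_eq_zero (fun k hk => by rw [hq0 k hk]; simp)]
    simp [← h]
  · rw [hRHS, Real.rpow_def_of_pos (by positivity : (0:ℝ) < p / K.card)]
    rw [Real.exp_le_exp]
    -- need: log (p / K.card) * p ≤ ∑ q log q
    have jensen := Real.convexOn_mul_log.map_sum_le (t := K)
      (w := fun _ => (K.card : ℝ)⁻¹) (p := fun k => (q k : ℝ))
      (fun k _ => by positivity)
      (by rw [Finset.sum_const, nsmul_eq_mul]; field_simp)
      (fun k _ => by simp)
    have e1 : ∑ k ∈ K, (K.card : ℝ)⁻¹ • (q k : ℝ) = p / K.card := by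
      rw [← Finset.smul_sum]; simp [div_eq_inv_mul]; exact Or.inl hp.symm
    rw [e1] at jensen
    have := mul_le_mul_of_nonneg_left jensen (le_of_lt hd0)
    calc Real.log (p / K.card) * p = (K.card : ℝ) * (p / K.card * Real.log (p / K.card)) := by
          field_simp
      _ ≤ (K.card : ℝ) * ∑ k ∈ K, (K.card : ℝ)⁻¹ * ((q k : ℝ) * Real.log (q k)) := this
      _ = ∑ k ∈ K, (q k : ℝ) * Real.log (q k) := by
          rw [Finset.mul_sum]
          refine Finset.sum_congr rfl fun k _ => ?_
          field_simp

lemma fiber_card_s16 {n : ℕ} (B : Matrix (Fin n) (Fin n) ℕ) {R C : Finset (Fin n)} {i₀ k : Fin n}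
    (hi₀ : i₀ ∈ R) (hk : k ∈ C) (hB : B i₀ k = 1) :
    ((matchings B R C).filter (fun M => M i₀ = k)).card = P B (R.erase i₀) (C.erase k) := by
  rw [P]
  apply Finset.card_bij' (fun M _ => Function.update M i₀ i₀) (fun N _ => Function.update N i₀ k)
  case hi =>
    intro M hM
    rw [Finset.mem_filter, mem_matchings] at hM
    obtain ⟨⟨hbij, hone, hoff⟩, hMi⟩ := hM
    rw [mem_matchings]
    have hEq : Set.EqOn M (Function.update M i₀ i₀) ↑(R.erase i₀) := by
      intro i hi
      simp only [Finset.coe_erase, Set.mem_diff, Set.mem_singleton_iff] at hi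
      rw [Function.update_of_ne hi.2]
    refine ⟨?_, ?_, ?_⟩
    · have := hbij.sdiff_singleton (by exact_mod_cast hi₀)
      rw [hMi] at this
      have h2 : Set.BijOn M ↑(R.erase i₀) ↑(C.erase k) := by
        rw [Finset.coe_erase, Finset.coe_erase]; exact this
      exact h2.congr hEq
    · intro i hi
      rw [← hEq (by exact_mod_cast hi)]
      exact hone i (Finset.mem_of_mem_erase hi)
    · intro i hi
      rcases eq_or_ne i i₀ with rfl | hne
      · rw [Function.update_self]
      · rw [Function.update_of_ne hne]
        exact hoff i (fun h => hi (Finset.mem_erase.2 ⟨hne, h⟩))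
  case hj =>
    intro N hN
    rw [mem_matchings] at hN
    obtain ⟨hbij, hone, hoff⟩ := hN
    rw [Finset.mem_filter, mem_matchings]
    have hEq : Set.EqOn N (Function.update N i₀ k) ↑(R.erase i₀) := by
      intro i hi
      simp only [Finset.coe_erase, Set.mem_diff, Set.mem_singleton_iff] at hi
      rw [Function.update_of_ne hi.2]
    have hki : Function.update N i₀ k i₀ = k := Function.update_self _ _ _
    refine ⟨⟨?_, ?_, ?_⟩, hki⟩
    · have h1 : Set.BijOn (Function.update N i₀ k) ↑(R.erase i₀) ↑(C.erase k) :=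
        hbij.congr hEq
      have h2 := h1.insert (a := i₀) (by rw [hki]; simp)
      rw [hki] at h2
      have e1 : insert i₀ (↑(R.erase i₀) : Set (Fin n)) = ↑R := by
        rw [← Finset.coe_insert, Finset.insert_erase hi₀]
      have e2 : insert k (↑(C.erase k) : Set (Fin n)) = ↑C := by
        rw [← Finset.coe_insert, Finset.insert_erase hk]
      rwa [e1, e2] at h2
    · intro i hi
      rcases eq_or_ne i i₀ with rfl | hne
      · rw [hki]; exact hB
      · rw [Function.update_of_ne hne]
        exact hone i (Finset.mem_erase.2 ⟨hne, hi⟩)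
    · intro i hi
      have hne : i ≠ i₀ := fun h => hi (h ▸ hi₀)
      rw [Function.update_of_ne hne]
      exact hoff i (fun h => hi (Finset.mem_of_mem_erase h))
  case left_inv =>
    intro M hM
    rw [Finset.mem_filter] at hM
    funext i
    rcases eq_or_ne i i₀ with rfl | hne
    · rw [Function.update_self, hM.2]
    · rw [Function.update_of_ne hne, Function.update_of_ne hne]
  case right_inv =>
    intro N hN
    rw [mem_matchings] at hN
    funext i
    rcases eq_or_ne i i₀ with rfl | hne
    · rw [Function.update_self, hN.2.2 _ (Finset.notMem_erase _ _)]
    · rw [Function.update_of_ne hne, Function.update_of_ne hne]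

lemma count_ones {n : ℕ} (B : Matrix (Fin n) (Fin n) ℕ) {R C : Finset (Fin n)}
    {M : Fin n → Fin n} (hM : M ∈ matchings B R C) {j : Fin n} (hj : j ∈ R) :
    ((R.erase j).filter (fun i => B j (M i) = 1)).card = d B j C - 1 := by
  rw [mem_matchings] at hM
  obtain ⟨hbij, hone, hoff⟩ := hM
  have key : ((R.erase j).filter (fun i => B j (M i) = 1)).card =
      ((C.filter (fun k => B j k = 1)).erase (M j)).card := by
    apply Finset.card_bij (fun i _ => M i)
    · intro i hi
      rw [Finset.mem_filter, Finset.mem_erase] at hi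
      refine Finset.mem_erase.2 ⟨?_, Finset.mem_filter.2
        ⟨Finset.mem_coe.1 (hbij.mapsTo hi.1.2), hi.2⟩⟩
      intro h
      exact hi.1.1 (hbij.injOn hi.1.2 hj h)
    · intro a ha b hb hab
      rw [Finset.mem_filter, Finset.mem_erase] at ha hb
      exact hbij.injOn ha.1.2 hb.1.2 hab
    · intro k hk
      rw [Finset.mem_erase, Finset.mem_filter] at hk
      obtain ⟨i, hi, hik⟩ := hbij.surjOn hk.2.1
      refine ⟨i, Finset.mem_filter.2 ⟨Finset.mem_erase.2 ⟨?_, Finset.mem_coe.1 hi⟩,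
        by rw [hik]; exact hk.2.2⟩, hik⟩
      rintro rfl
      exact hk.1 hik.symm
  rw [key, Finset.card_erase_of_mem, d]
  exact Finset.mem_filter.2 ⟨hbij.mapsTo hj, hone j hj⟩

noncomputable def g (s : ℕ) : ℝ := (s.factorial : ℝ) ^ ((1 : ℝ) / s)

lemma g_pos (s : ℕ) : 0 < g s := by unfold g; positivity

lemma g_pow_self (t : ℕ) : g t ^ t = (t.factorial : ℝ) := by
  rcases Nat.eq_zero_or_pos t with rfl | ht
  · simp [g]
  · rw [g, ← Real.rpow_natCast ((t.factorial : ℝ) ^ ((1:ℝ)/t)) t,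
      ← Real.rpow_mul (by positivity), one_div,
      inv_mul_cancel₀ (by exact_mod_cast ht.ne'), Real.rpow_one]

lemma g_pow (s k : ℕ) : g s ^ k = (s.factorial : ℝ) ^ ((k : ℝ) / s) := by
  rw [g, ← Real.rpow_natCast ((s.factorial : ℝ) ^ ((1:ℝ)/s)) k,
    ← Real.rpow_mul (by positivity), one_div, inv_mul_eq_div]

/-- The key factorial identity `d * (d-1)! * (d!)^{(m-d)/d} = (d!)^{m/d}`. -/
lemma key_identity {s m : ℕ} (hs : 1 ≤ s) (hsm : s ≤ m) :
    (s : ℝ) * (g (s - 1) ^ (s - 1) * g s ^ (m - s)) = g s ^ m := by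
  rw [g_pow_self, g_pow, g_pow]
  have hfac : (0 : ℝ) < (s.factorial : ℝ) := by exact_mod_cast s.factorial_pos
  have hs0 : (0 : ℝ) < (s : ℝ) := by exact_mod_cast hs
  have e1 : (s : ℝ) * ((s - 1).factorial : ℝ) = (s.factorial : ℝ) := by
    exact_mod_cast congrArg (Nat.cast : ℕ → ℝ) (Nat.mul_factorial_pred (by omega))
  rw [← mul_assoc, e1, ← Real.rpow_one_add' hfac.le (by
    intro h
    have : (1 : ℝ) + (↑(m-s) : ℝ)/s > 0 := by positivity
    linarith)]
  congr 1
  have : ((m - s : ℕ) : ℝ) = (m : ℝ) - s := by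
    rw [Nat.cast_sub hsm]
  rw [this]
  field_simp
  ring

/-- Bregman–Minc inequality, local form. -/
lemma bregman {n : ℕ} (B : Matrix (Fin n) (Fin n) ℕ) :
    ∀ m : ℕ, ∀ R C : Finset (Fin n), R.card = m → C.card = m →
    (P B R C : ℝ) ≤ ∏ j ∈ R, g (d B j C) := by
  intro m
  induction m using Nat.strong_induction_on with
  | _ m IH =>
  intro R C hR hC
  rcases Nat.eq_zero_or_pos m with rfl | hm
  · rw [Finset.card_eq_zero] at hR hC
    subst hR; subst hC
    simp [P_empty]
  set p := P B R C with hp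
  rcases Nat.eq_zero_or_pos p with hp0 | hppos
  · rw [hp0]
    push_cast
    exact Finset.prod_nonneg fun j _ => (g_pos _).le
  set S := matchings B R C with hS
  -- row degrees are positive
  have f1 : ∀ i ∈ R, 0 < d B i C := by
    intro i hi
    by_contra h
    push_neg at h
    have hd0 : d B i C = 0 := Nat.le_zero.1 h
    have := P_expand B (C := C) hi
    rw [d, Finset.card_eq_zero] at hd0
    rw [hd0, Finset.sum_empty] at this
    omega
  have dle : ∀ j, d B j C ≤ m := fun j => hC ▸ Finset.card_filter_le _ _
  have cardS : S.card = p := rfl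
  -- step (f2): per-row inequality
  have f2 : ∀ i ∈ R, (p : ℝ) ^ (p : ℝ) ≤ (d B i C : ℝ) ^ (p : ℝ) *
      ∏ M ∈ S, (P B (R.erase i) (C.erase (M i)) : ℝ) := by
    intro i hi
    set K := C.filter (fun k => B i k = 1) with hK
    have hdK : K.card = d B i C := rfl
    have hdpos : 0 < d B i C := f1 i hi
    have hKne : K.Nonempty := by rw [← Finset.card_pos, hdK]; exact hdpos
    set q : Fin n → ℕ := fun k => (S.filter (fun M => M i = k)).card with hq
    have hsum : ∑ k ∈ K, (q k : ℝ) = (p : ℝ) := by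
      rw [← Nat.cast_sum]
      exact_mod_cast congrArg (Nat.cast : ℕ → ℝ) (P_expand B hi)
    have conv := convexity_lemma K q hKne
    rw [hsum, hdK] at conv
    have hmaps : ∀ M ∈ S, M i ∈ K := by
      intro M hM
      rw [hS, mem_matchings] at hM
      exact Finset.mem_filter.2 ⟨Finset.mem_coe.1 (hM.1.mapsTo hi), hM.2.1 i hi⟩
    have hfib : ∏ M ∈ S, (P B (R.erase i) (C.erase (M i)) : ℝ) =
        ∏ k ∈ K, (q k : ℝ) ^ (q k : ℝ) := by
      rw [← Finset.prod_fiberwise_of_maps_to hmaps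
        (fun M => (P B (R.erase i) (C.erase (M i)) : ℝ))]
      refine Finset.prod_congr rfl fun k hk => ?_
      rw [hK, Finset.mem_filter] at hk
      have hconst : ∀ M ∈ S.filter (fun M => M i = k),
          (P B (R.erase i) (C.erase (M i)) : ℝ) = (P B (R.erase i) (C.erase k) : ℝ) := by
        intro M hM
        rw [Finset.mem_filter] at hM
        rw [hM.2]
      rw [Finset.prod_congr rfl hconst, Finset.prod_const]
      rw [hq]
      simp only
      rw [fiber_card_s16 B hi hk.1 hk.2, ← Real.rpow_natCast]
    rw [hfib]
    have hdpos' : (0 : ℝ) < (d B i C : ℝ) := by exact_mod_cast hdpos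
    have e : (p : ℝ) ^ (p : ℝ) = (d B i C : ℝ) ^ (p : ℝ) *
        (((p : ℝ) / (d B i C : ℝ)) ^ (p : ℝ)) := by
      rw [Real.div_rpow (by positivity) hdpos'.le]
      field_simp
    rw [e]
    exact mul_le_mul_of_nonneg_left conv (Real.rpow_nonneg hdpos'.le _)
  -- step (f5): for each matching, bound the product of minors
  set w : Fin n → ℝ := fun j => g (d B j C - 1) ^ (d B j C - 1) * g (d B j C) ^ (m - d B j C)
    with hw
  have hwpos : ∀ j, 0 < w j := fun j =>
    mul_pos (pow_pos (g_pos _) _) (pow_pos (g_pos _) _)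
  have f5 : ∀ M ∈ S, ∏ i ∈ R, (P B (R.erase i) (C.erase (M i)) : ℝ) ≤ ∏ j ∈ R, w j := by
    intro M hM
    have hMm := hM
    rw [hS, mem_matchings] at hMm
    obtain ⟨hbij, hone, hoff⟩ := hMm
    have stepa : ∀ i ∈ R, (P B (R.erase i) (C.erase (M i)) : ℝ) ≤
        ∏ j ∈ R.erase i, g (d B j (C.erase (M i))) := by
      intro i hi
      have hMi : M i ∈ C := Finset.mem_coe.1 (hbij.mapsTo hi)
      exact IH (m - 1) (by omega) _ _
        (by rw [Finset.card_erase_of_mem hi, hR])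
        (by rw [Finset.card_erase_of_mem hMi, hC])
    calc ∏ i ∈ R, (P B (R.erase i) (C.erase (M i)) : ℝ)
        ≤ ∏ i ∈ R, ∏ j ∈ R.erase i, g (d B j (C.erase (M i))) :=
          Finset.prod_le_prod (fun i _ => by positivity) stepa
      _ = ∏ j ∈ R, ∏ i ∈ R.erase j, g (d B j (C.erase (M i))) := by
          apply Finset.prod_comm'
          intro i j
          simp only [Finset.mem_erase]
          tauto
      _ = ∏ j ∈ R, w j := by
          refine Finset.prod_congr rfl fun j hj => ?_
          rw [← Finset.prod_filter_mul_prod_filter_not (R.erase j) (fun i => B j (M i) = 1), hw]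
          have hfac : ∀ i ∈ R.erase j, M i ∈ C :=
            fun i hi => Finset.mem_coe.1 (hbij.mapsTo (Finset.mem_of_mem_erase hi))
          congr 1
          · rw [Finset.prod_congr rfl (fun i hi => ?_), Finset.prod_const,
              count_ones B hM hj]
            rw [Finset.mem_filter] at hi
            rw [d_erase B (hfac i hi.1), if_pos hi.2]
          · rw [Finset.prod_congr rfl (fun i hi => ?_), Finset.prod_const]
            · congr 1
              have h1 := Finset.card_filter_add_card_filter_not
                (s := R.erase j) (p := fun i => B j (M i) = 1)
              rw [count_ones B hM hj, Finset.card_erase_of_mem hj, hR] at h1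
              have h2 := f1 j hj
              have h3 := dle j
              omega
            · rw [Finset.mem_filter] at hi
              rw [d_erase B (hfac i hi.1), if_neg hi.2]
  -- assemble the chain
  have hppos' : (0 : ℝ) < (p : ℝ) := by exact_mod_cast hppos
  have chain : (p : ℝ) ^ ((m : ℝ) * (p : ℝ)) ≤
      (∏ j ∈ R, g (d B j C)) ^ ((m : ℝ) * (p : ℝ)) := by
    calc (p : ℝ) ^ ((m : ℝ) * (p : ℝ)) = ∏ _i ∈ R, (p : ℝ) ^ (p : ℝ) := by
          rw [Finset.prod_const, hR, ← Real.rpow_natCast ((p:ℝ) ^ (p:ℝ)) m,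
            ← Real.rpow_mul (by positivity), mul_comm]
      _ ≤ ∏ i ∈ R, ((d B i C : ℝ) ^ (p : ℝ) *
            ∏ M ∈ S, (P B (R.erase i) (C.erase (M i)) : ℝ)) :=
          Finset.prod_le_prod (fun i _ => by positivity) f2
      _ = (∏ i ∈ R, (d B i C : ℝ) ^ (p : ℝ)) *
            ∏ i ∈ R, ∏ M ∈ S, (P B (R.erase i) (C.erase (M i)) : ℝ) :=
          Finset.prod_mul_distrib
      _ = (∏ i ∈ R, (d B i C : ℝ) ^ (p : ℝ)) *
            ∏ M ∈ S, ∏ i ∈ R, (P B (R.erase i) (C.erase (M i)) : ℝ) := by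
          rw [Finset.prod_comm]
      _ ≤ (∏ i ∈ R, (d B i C : ℝ) ^ (p : ℝ)) * ∏ M ∈ S, ∏ j ∈ R, w j := by
          refine mul_le_mul_of_nonneg_left
            (Finset.prod_le_prod (fun M _ => Finset.prod_nonneg fun i _ => by positivity) f5)
            (Finset.prod_nonneg fun i _ => by positivity)
      _ = (∏ i ∈ R, (d B i C : ℝ) ^ (p : ℝ)) * (∏ j ∈ R, w j) ^ p := by
          rw [Finset.prod_const, cardS]
      _ = ∏ j ∈ R, ((d B j C : ℝ) ^ (p : ℝ) * w j ^ p) := by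
          rw [← Finset.prod_pow, ← Finset.prod_mul_distrib]
      _ = ∏ j ∈ R, (g (d B j C) ^ m) ^ (p : ℝ) := by
          refine Finset.prod_congr rfl fun j hj => ?_
          have hd0 : (0 : ℝ) ≤ (d B j C : ℝ) := by positivity
          rw [← Real.rpow_natCast (w j) p, ← Real.mul_rpow hd0 (hwpos j).le,
            key_identity (f1 j hj) (dle j)]
      _ = (∏ j ∈ R, g (d B j C)) ^ ((m : ℝ) * (p : ℝ)) := by
          rw [← Real.finset_prod_rpow R _ (fun j _ => (g_pos _).le)]
          refine Finset.prod_congr rfl fun j hj => ?_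
          rw [← Real.rpow_natCast (g (d B j C)) m, ← Real.rpow_mul (g_pos _).le]
  have hmp : (0 : ℝ) < (m : ℝ) * (p : ℝ) := by
    have : (0:ℝ) < (m:ℝ) := by exact_mod_cast hm
    positivity
  exact (Real.rpow_le_rpow_iff (by positivity)
    (Finset.prod_nonneg fun j _ => (g_pos _).le) hmp).1 chain

lemma perm_sum_eq {n : ℕ} (B : Matrix (Fin n) (Fin n) ℕ)
    (h01 : ∀ i j, B i j = 0 ∨ B i j = 1) :
    (∑ σ : Equiv.Perm (Fin n), ∏ i, B i (σ i)) = P B Finset.univ Finset.univ := by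
  have hterm : ∀ σ : Equiv.Perm (Fin n), (∏ i, B i (σ i)) =
      if (∀ i, B i (σ i) = 1) then 1 else 0 := by
    intro σ
    split_ifs with h
    · exact Finset.prod_eq_one fun i _ => h i
    · push_neg at h
      obtain ⟨i, hi⟩ := h
      exact Finset.prod_eq_zero (Finset.mem_univ i) ((h01 i (σ i)).resolve_right hi)
  rw [Finset.sum_congr rfl fun σ _ => hterm σ, Finset.sum_boole, Nat.cast_id, P]
  apply Finset.card_bij (fun (σ : Equiv.Perm (Fin n)) _ => ⇑σ)
  · intro σ hσ
    rw [Finset.mem_filter] at hσ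
    rw [mem_matchings]
    refine ⟨?_, fun i _ => hσ.2 i, fun i hi => absurd (Finset.mem_univ i) hi⟩
    rw [Finset.coe_univ]
    exact σ.bijective.bijOn_univ
  · intro σ _ τ _ h
    exact Equiv.coe_fn_injective h
  · intro M hM
    rw [mem_matchings] at hM
    obtain ⟨hbij, hone, -⟩ := hM
    rw [Finset.coe_univ] at hbij
    have hbi : Function.Bijective M := Set.bijOn_univ.1 hbij
    refine ⟨Equiv.ofBijective M hbi, Finset.mem_filter.2 ⟨Finset.mem_univ _,
      fun i => hone i (Finset.mem_univ i)⟩, rfl⟩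

/-- If `B` is an `n × n` matrix with entries in `{0,1}` all of whose row sums
equal `r`, with `1 ≤ r ≤ n`, then the permanent
`per B = Σ_{σ ∈ S_n} ∏_i B_{i,σ(i)}` satisfies `per B ≤ (r!)^{n/r}`
(real exponent). -/
theorem permanent_upper_bound (n r : ℕ) (hn : 1 ≤ n) (hr : 1 ≤ r) (hrn : r ≤ n)
    (B : Matrix (Fin n) (Fin n) ℕ)
    (h01 : ∀ i j, B i j = 0 ∨ B i j = 1)
    (hrow : ∀ i, ∑ j, B i j = r) :
    ((∑ σ : Equiv.Perm (Fin n), ∏ i, B i (σ i) : ℕ) : ℝ) ≤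
      (Nat.factorial r : ℝ) ^ ((n : ℝ) / (r : ℝ)) := by
  classical
  have hd : ∀ j : Fin n, d B j Finset.univ = r := by
    intro j
    rw [d, ← hrow j]
    rw [Finset.card_filter]
    refine Finset.sum_congr rfl fun k _ => ?_
    rcases h01 j k with h | h <;> simp [h]
  have hB := bregman B n Finset.univ Finset.univ (by simp) (by simp)
  rw [perm_sum_eq B h01]
  refine hB.trans ?_
  have : ∏ j : Fin n, g (d B j Finset.univ) = g r ^ n := by
    rw [Finset.prod_congr rfl fun j _ => by rw [hd j], Finset.prod_const,
      Finset.card_univ, Fintype.card_fin]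
  rw [this, g, ← Real.rpow_natCast ((r.factorial : ℝ) ^ ((1:ℝ)/r)) n,
    ← Real.rpow_mul (by positivity), one_div, inv_mul_eq_div]
end
end
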